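/- arXiv:2605.19992 — 8 statements merged into one kernel-verified Lean document; each statement's English description precedes it below -/
import Mathlib

section
/- Let α>0, λ>0, l>0, let f be continuous on [0,1]×[0,∞), and let q̃ be a classical solution on [0,1]×[0,∞) of the heat system q̃_t = α q̃_xx − λ q̃ + f on (0,1)×(0,∞), with boundary conditions q̃_x(0,t)=0 and q̃_x(1,t) = −l q̃(1,t) for all t>0, and initial datum q̃(x,0)=q̃₀(x) with q̃₀ continuous on [0,1]. Then for every σ ∈ (0,λ) and every t>0, ‖q̃(·,t)‖_{C([0,1])} ≤ e^{−σt} ‖q̃₀‖_{C([0,1])} + (1/(λ−σ)) ‖f‖_{C([0,1]×[0,t])}. In particular, the value |q̃(0,t)| satisfies the same bound. -/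
/-- Max-norm of a function over `[0,1]`. -/
noncomputable def supIcc01 (h : ℝ → ℝ) : ℝ := sSup ((fun x => |h x|) '' Set.Icc 0 1)

/-- Max-norm of a function of `(x,s)` over `[0,1] × [0,t]`. -/
noncomputable def supRect (F : ℝ → ℝ → ℝ) (t : ℝ) : ℝ :=
  sSup ((fun p : ℝ × ℝ => |F p.1 p.2|) '' (Set.Icc 0 1 ×ˢ Set.Icc 0 t))

/-- `u` is a classical solution on `[0,1] × [0,∞)` of `u_t = a u_xx - lam u + f`,
with `ux, uxx, ut` its partial derivatives. -/
structure IsParabolicSol (a lam : ℝ) (f u ux uxx ut : ℝ → ℝ → ℝ) : Prop where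
  cont_u : ContinuousOn (fun p : ℝ × ℝ => u p.1 p.2) (Set.Icc 0 1 ×ˢ Set.Ici 0)
  cont_ux : ContinuousOn (fun p : ℝ × ℝ => ux p.1 p.2) (Set.Icc 0 1 ×ˢ Set.Ioi 0)
  cont_ut : ContinuousOn (fun p : ℝ × ℝ => ut p.1 p.2) (Set.Ioo 0 1 ×ˢ Set.Ioi 0)
  cont_uxx : ContinuousOn (fun p : ℝ × ℝ => uxx p.1 p.2) (Set.Ioo 0 1 ×ˢ Set.Ioi 0)
  deriv_x : ∀ t ∈ Set.Ioi (0:ℝ), ∀ x ∈ Set.Icc (0:ℝ) 1,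
      HasDerivWithinAt (fun y => u y t) (ux x t) (Set.Icc 0 1) x
  deriv_xx : ∀ t ∈ Set.Ioi (0:ℝ), ∀ x ∈ Set.Ioo (0:ℝ) 1,
      HasDerivWithinAt (fun y => ux y t) (uxx x t) (Set.Ioo 0 1) x
  deriv_t : ∀ t ∈ Set.Ioi (0:ℝ), ∀ x ∈ Set.Ioo (0:ℝ) 1,
      HasDerivWithinAt (fun s => u x s) (ut x t) (Set.Ioi 0) t
  pde : ∀ t ∈ Set.Ioi (0:ℝ), ∀ x ∈ Set.Ioo (0:ℝ) 1,
      ut x t = a * uxx x t - lam * u x t + f x t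


open Set Filter Topology


noncomputable def psiA (y : ℝ) : ℝ := Real.exp y + Real.exp (1 - y)
noncomputable def psiD (y : ℝ) : ℝ := Real.exp y - Real.exp (1 - y)

lemma psiA_pos (y : ℝ) : 0 < psiA y := add_pos (Real.exp_pos _) (Real.exp_pos _)

lemma hasDerivAt_inner (y : ℝ) : HasDerivAt (fun z : ℝ => Real.exp (1 - z)) (-Real.exp (1 - y)) y := by
  have hin : HasDerivAt (fun z : ℝ => 1 - z) (-1) y := by
    simpa using (hasDerivAt_id y).const_sub 1
  have h := (Real.hasDerivAt_exp (1 - y)).comp y hin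
  rw [mul_neg_one] at h
  exact h

lemma hasDerivAt_psiA (y : ℝ) : HasDerivAt psiA (psiD y) y := by
  have := (Real.hasDerivAt_exp y).add (hasDerivAt_inner y)
  rw [show psiD y = Real.exp y + -Real.exp (1 - y) by rw [psiD, sub_eq_add_neg]]
  exact this

lemma hasDerivAt_psiD (y : ℝ) : HasDerivAt psiD (psiA y) y := by
  have := (Real.hasDerivAt_exp y).sub (hasDerivAt_inner y)
  rw [show psiA y = Real.exp y - -Real.exp (1 - y) by rw [psiA, sub_neg_eq_add]]
  exact this

lemma psiD_zero_neg : psiD 0 < 0 := by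
  have : Real.exp 0 < Real.exp 1 := Real.exp_lt_exp.2 one_pos
  simp only [psiD, sub_zero]
  linarith

lemma psiD_one_pos : 0 < psiD 1 := by
  have : Real.exp 0 < Real.exp 1 := Real.exp_lt_exp.2 one_pos
  simp only [psiD, sub_self]
  linarith


lemma slope_nonneg_lim {g : ℝ → ℝ} {g' x : ℝ} {s t : Set ℝ}
    (hg : HasDerivWithinAt g g' s x) (hts : t ⊆ s \ {x})
    (hne : (𝓝[t] x).NeBot)
    (hsl : ∀ y ∈ t, 0 ≤ (g y - g x) / (y - x)) : 0 ≤ g' := by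
  have h := (hasDerivWithinAt_iff_tendsto_slope.1 hg).mono_left (nhdsWithin_mono x hts)
  refine ge_of_tendsto h ?_
  filter_upwards [eventually_mem_nhdsWithin] with y hy
  simpa [slope_def_field, div_eq_inv_mul] using hsl y hy

lemma slope_nonpos_lim {g : ℝ → ℝ} {g' x : ℝ} {s t : Set ℝ}
    (hg : HasDerivWithinAt g g' s x) (hts : t ⊆ s \ {x})
    (hne : (𝓝[t] x).NeBot)
    (hsl : ∀ y ∈ t, (g y - g x) / (y - x) ≤ 0) : g' ≤ 0 := by
  have h := (hasDerivWithinAt_iff_tendsto_slope.1 hg).mono_left (nhdsWithin_mono x hts)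
  refine le_of_tendsto h ?_
  filter_upwards [eventually_mem_nhdsWithin] with y hy
  simpa [slope_def_field, div_eq_inv_mul] using hsl y hy

lemma second_deriv_nonneg_at_min {Z Zx : ℝ → ℝ} {x0 Zxx : ℝ}
    (hx0 : x0 ∈ Ioo (0:ℝ) 1)
    (hd : ∀ x ∈ Icc (0:ℝ) 1, HasDerivWithinAt Z (Zx x) (Icc 0 1) x)
    (hd2 : HasDerivWithinAt Zx Zxx (Ioo 0 1) x0)
    (hmin : ∀ y ∈ Icc (0:ℝ) 1, Z x0 ≤ Z y) : 0 ≤ Zxx := by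
  have hx0' : x0 ∈ Icc (0:ℝ) 1 := Ioo_subset_Icc_self hx0
  have hIccnhds : Icc (0:ℝ) 1 ∈ 𝓝 x0 := Icc_mem_nhds hx0.1 hx0.2
  have hIoonhds : Ioo (0:ℝ) 1 ∈ 𝓝 x0 := Ioo_mem_nhds hx0.1 hx0.2
  have hZx0 : Zx x0 = 0 := by
    have hloc : IsLocalMin Z x0 := by
      have : IsMinOn Z (Icc 0 1) x0 := fun y hy => hmin y hy
      exact this.isLocalMin hIccnhds
    exact hloc.hasDerivAt_eq_zero ((hd x0 hx0').hasDerivAt hIccnhds)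
  by_contra hneg
  push_neg at hneg
  have h2 : HasDerivAt Zx Zxx x0 := hd2.hasDerivAt hIoonhds
  have hslope : ∀ᶠ y in 𝓝[≠] x0, slope Zx x0 y < 0 :=
    (hasDerivAt_iff_tendsto_slope.1 h2).eventually (Iio_mem_nhds hneg)
  have hslope' : ∀ᶠ y in 𝓝 x0, y ≠ x0 → slope Zx x0 y < 0 := by
    rwa [eventually_nhdsWithin_iff] at hslope
  obtain ⟨ε, hε, hball⟩ := Metric.eventually_nhds_iff.1 hslope'
  set x1 : ℝ := min (x0 + ε/2) ((x0 + 1)/2) with hx1def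
  have hx01 : x0 < x1 := by apply lt_min <;> linarith [hx0.2]
  have hx11 : x1 < 1 := by
    apply (min_le_right _ _).trans_lt; linarith [hx0.2]
  have hZxneg : ∀ y ∈ Ioo x0 x1, Zx y < 0 := by
    intro y hy
    have hdist : dist y x0 < ε := by
      rw [Real.dist_eq, abs_of_pos (by linarith [hy.1])]
      have : y < x0 + ε/2 := hy.2.trans_le (min_le_left _ _)
      linarith
    have hsl := hball hdist (ne_of_gt hy.1)
    rw [slope_def_field, hZx0] at hsl
    have hy0 : 0 < y - x0 := by linarith [hy.1]
    rcases (div_neg_iff).1 (by simpa using hsl) with ⟨h1, h2⟩ | ⟨h1, h2⟩ <;> linarith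
  have hsub : Icc x0 x1 ⊆ Icc (0:ℝ) 1 := Icc_subset_Icc (le_of_lt hx0.1) (le_of_lt hx11)
  have hcont : ContinuousOn Z (Icc x0 x1) := fun y hy =>
    ((hd y (hsub hy)).continuousWithinAt).mono hsub
  have hanti : StrictAntiOn Z (Icc x0 x1) := by
    apply strictAntiOn_of_deriv_neg (convex_Icc _ _) hcont
    intro y hy
    rw [interior_Icc] at hy
    have hyI : y ∈ Ioo (0:ℝ) 1 := ⟨lt_trans hx0.1 hy.1, lt_trans hy.2 hx11⟩
    have : HasDerivAt Z (Zx y) y :=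
      (hd y (Ioo_subset_Icc_self hyI)).hasDerivAt (Icc_mem_nhds hyI.1 hyI.2)
    rw [this.deriv]
    exact hZxneg y ⟨hy.1, hy.2⟩
  have := hanti (left_mem_Icc.2 (le_of_lt hx01)) (right_mem_Icc.2 (le_of_lt hx01)) hx01
  have := hmin x1 (hsub (right_mem_Icc.2 (le_of_lt hx01)))
  linarith

/-- Abstract parabolic minimum principle on `[0,1] × [0,T]`. -/
lemma no_neg_min {T : ℝ} (hT : 0 < T) {Z Zx Zxx Zt : ℝ → ℝ → ℝ}
    (hcont : ContinuousOn (fun p : ℝ × ℝ => Z p.1 p.2) (Icc 0 1 ×ˢ Icc 0 T))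
    (hdx : ∀ t ∈ Ioi (0:ℝ), ∀ x ∈ Icc (0:ℝ) 1,
      HasDerivWithinAt (fun y => Z y t) (Zx x t) (Icc 0 1) x)
    (hdxx : ∀ t ∈ Ioi (0:ℝ), ∀ x ∈ Ioo (0:ℝ) 1,
      HasDerivWithinAt (fun y => Zx y t) (Zxx x t) (Ioo 0 1) x)
    (hdt : ∀ t ∈ Ioi (0:ℝ), ∀ x ∈ Ioo (0:ℝ) 1,
      HasDerivWithinAt (fun s => Z x s) (Zt x t) (Ioi 0) t)
    (hinit : ∀ x ∈ Icc (0:ℝ) 1, 0 < Z x 0)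
    (hb0 : ∀ t ∈ Ioc (0:ℝ) T, Zx 0 t < 0)
    (hb1 : ∀ t ∈ Ioc (0:ℝ) T, Z 1 t < 0 → 0 < Zx 1 t)
    (hint : ∀ t ∈ Ioc (0:ℝ) T, ∀ x ∈ Ioo (0:ℝ) 1,
      Z x t < 0 → 0 ≤ Zxx x t → Zt x t ≤ 0 → False) :
    ∀ x ∈ Icc (0:ℝ) 1, ∀ t ∈ Icc 0 T, 0 ≤ Z x t := by
  set S : Set (ℝ × ℝ) := Icc 0 1 ×ˢ Icc 0 T with hSdef
  have hScomp : IsCompact S := (isCompact_Icc).prod isCompact_Icc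
  have hSne : S.Nonempty := ⟨(0, 0), by
    constructor <;> simp [le_of_lt hT]⟩
  obtain ⟨p0, hp0S, hminOn⟩ := hScomp.exists_isMinOn hSne hcont
  have hmin : ∀ q ∈ S, Z p0.1 p0.2 ≤ Z q.1 q.2 := fun q hq => hminOn hq
  suffices h : 0 ≤ Z p0.1 p0.2 by
    intro x hx t ht
    exact le_trans h (hmin (x, t) ⟨hx, ht⟩)
  by_contra hZneg
  push_neg at hZneg
  obtain ⟨hx0S, ht0S⟩ := hp0S
  set x0 := p0.1
  set t0 := p0.2
  -- time is positive
  have ht0pos : 0 < t0 := by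
    rcases eq_or_lt_of_le ht0S.1 with h | h
    · exfalso
      have h2 := hinit x0 hx0S
      rw [← h] at hZneg
      linarith
    · exact h
  have ht0' : t0 ∈ Ioc (0:ℝ) T := ⟨ht0pos, ht0S.2⟩
  have ht0Ioi : t0 ∈ Ioi (0:ℝ) := ht0pos
  -- spatial minimum property at time t0
  have hminx : ∀ y ∈ Icc (0:ℝ) 1, Z x0 t0 ≤ Z y t0 := fun y hy =>
    hmin (y, t0) ⟨hy, ht0S⟩
  -- x0 ≠ 0
  have hx0ne0 : x0 ≠ 0 := by
    intro h0
    have hZx0 : 0 ≤ Zx 0 t0 := by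
      apply slope_nonneg_lim (hdx t0 ht0Ioi 0 (by simp)) (t := Ioo (0:ℝ) 1)
      · intro y hy; exact ⟨Ioo_subset_Icc_self hy, ne_of_gt hy.1⟩
      · exact left_nhdsWithin_Ioo_neBot one_pos
      · intro y hy
        apply div_nonneg _ (by linarith [hy.1])
        have := hminx y (Ioo_subset_Icc_self hy)
        rw [← h0]; linarith [hminx 0 (by simp)]
    linarith [hb0 t0 ht0']
  -- x0 ≠ 1
  have hx0ne1 : x0 ≠ 1 := by
    intro h1
    have hZx1 : Zx 1 t0 ≤ 0 := by
      apply slope_nonpos_lim (hdx t0 ht0Ioi 1 (by simp)) (t := Ioo (0:ℝ) 1)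
      · intro y hy; exact ⟨Ioo_subset_Icc_self hy, ne_of_lt hy.2⟩
      · exact right_nhdsWithin_Ioo_neBot one_pos
      · intro y hy
        apply div_nonpos_of_nonneg_of_nonpos _ (by linarith [hy.2])
        have := hminx y (Ioo_subset_Icc_self hy)
        rw [← h1]; linarith [hminx 1 (by simp)]
    have hZ1neg : Z 1 t0 < 0 := by rw [← h1]; exact hZneg
    linarith [hb1 t0 ht0' hZ1neg]
  have hx0I : x0 ∈ Ioo (0:ℝ) 1 :=
    ⟨lt_of_le_of_ne hx0S.1 (Ne.symm hx0ne0), lt_of_le_of_ne hx0S.2 hx0ne1⟩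
  -- Zt ≤ 0
  have hZt : Zt x0 t0 ≤ 0 := by
    apply slope_nonpos_lim (hdt t0 ht0Ioi x0 hx0I) (t := Ioo (0:ℝ) t0)
    · intro s hs; exact ⟨hs.1, ne_of_lt hs.2⟩
    · exact right_nhdsWithin_Ioo_neBot ht0pos
    · intro s hs
      apply div_nonpos_of_nonneg_of_nonpos _ (by linarith [hs.2])
      have : Z x0 t0 ≤ Z x0 s :=
        hmin (x0, s) ⟨hx0S, ⟨le_of_lt hs.1, le_of_lt (lt_of_lt_of_le hs.2 ht0S.2)⟩⟩
      linarith
  -- Zxx ≥ 0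
  have hZxx : 0 ≤ Zxx x0 t0 :=
    second_deriv_nonneg_at_min hx0I (fun x hx => hdx t0 ht0Ioi x hx)
      (hdxx t0 ht0Ioi x0 hx0I) hminx
  exact hint t0 ht0' x0 hx0I hZneg hZxx hZt

/-- One-sided comparison principle. -/
lemma comparison {a lam l σ T : ℝ} (ha : 0 < a) (hl : 0 < l)
    (hσ : 0 < σ) (hσl : σ < lam) (hT : 0 < T)
    {f u ux uxx ut : ℝ → ℝ → ℝ}
    (hsol : IsParabolicSol a lam f u ux uxx ut)
    (hbc0 : ∀ t > (0:ℝ), ux 0 t = 0)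
    (hbc1 : ∀ t > (0:ℝ), ux 1 t = -l * u 1 t)
    {M0 F : ℝ} (hM0 : 0 ≤ M0) (hF : 0 ≤ F)
    (hinit : ∀ x ∈ Set.Icc (0:ℝ) 1, u x 0 ≤ M0)
    (hfb : ∀ x ∈ Set.Icc (0:ℝ) 1, ∀ s ∈ Set.Icc (0:ℝ) T, f x s ≤ F) :
    ∀ x ∈ Set.Icc (0:ℝ) 1, u x T ≤ Real.exp (-σ*T) * M0 + F / (lam - σ) := by
  have hlam : 0 < lam := hσ.trans hσl
  have hls : 0 < lam - σ := by linarith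
  have hW : 0 ≤ F / (lam - σ) := div_nonneg hF hls.le
  have hψc : Continuous psiA := by unfold psiA; continuity
  -- key claim with penalization parameter ε
  have key : ∀ ε > (0:ℝ), ∀ x ∈ Icc (0:ℝ) 1,
      u x T ≤ Real.exp (-σ*T) * M0 + F/(lam-σ) + ε * Real.exp (a*T) * psiA x := by
    intro ε hε
    have main := no_neg_min (T := T) hT
      (Z := fun y s => Real.exp (-σ*s) * M0 + F/(lam-σ) + ε * Real.exp (a*s) * psiA y - u y s)
      (Zx := fun y s => ε * Real.exp (a*s) * psiD y - ux y s)
      (Zxx := fun y s => ε * Real.exp (a*s) * psiA y - uxx y s)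
      (Zt := fun y s => Real.exp (-σ*s) * -σ * M0 + ε * (Real.exp (a*s) * a) * psiA y - ut y s)
      ?_ ?_ ?_ ?_ ?_ ?_ ?_ ?_
    case _ => -- use main
      intro x hx
      have h := main x hx T (right_mem_Icc.2 hT.le)
      linarith
    case _ => -- continuity
      refine ContinuousOn.sub ?_ (hsol.cont_u.mono (prod_mono Subset.rfl Icc_subset_Ici_self))
      apply Continuous.continuousOn
      have h1 : Continuous fun p : ℝ × ℝ => Real.exp (-σ * p.2) * M0 :=
        (Real.continuous_exp.comp (continuous_const.mul continuous_snd)).mul continuous_const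
      have h2 : Continuous fun p : ℝ × ℝ => ε * Real.exp (a * p.2) * psiA p.1 :=
        ((continuous_const.mul (Real.continuous_exp.comp (continuous_const.mul continuous_snd))).mul
          (hψc.comp continuous_fst))
      exact (h1.add continuous_const).add h2
    case _ => -- x-derivative
      intro t ht x hx
      exact ((((hasDerivAt_psiA x).const_mul (ε * Real.exp (a*t))).const_add
        (Real.exp (-σ*t) * M0 + F/(lam-σ))).hasDerivWithinAt).sub (hsol.deriv_x t ht x hx)
    case _ => -- xx-derivative
      intro t ht x hx
      exact (((hasDerivAt_psiD x).const_mul (ε * Real.exp (a*t))).hasDerivWithinAt).sub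
        (hsol.deriv_xx t ht x hx)
    case _ => -- t-derivative
      intro t ht x hx
      have hin1 : HasDerivAt (fun s : ℝ => -σ * s) (-σ) t := by
        simpa using (hasDerivAt_id t).const_mul (-σ)
      have hin2 : HasDerivAt (fun s : ℝ => a * s) a t := by
        simpa using (hasDerivAt_id t).const_mul a
      have hexp1 : HasDerivAt (fun s : ℝ => Real.exp (-σ*s)) (Real.exp (-σ*t) * -σ) t := hin1.exp
      have hexp2 : HasDerivAt (fun s : ℝ => Real.exp (a*s)) (Real.exp (a*t) * a) t := hin2.exp
      have h1 : HasDerivAt (fun s : ℝ => Real.exp (-σ*s) * M0) (Real.exp (-σ*t) * -σ * M0) t :=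
        hexp1.mul_const M0
      have h2 : HasDerivAt (fun s : ℝ => ε * Real.exp (a*s) * psiA x)
          (ε * (Real.exp (a*t) * a) * psiA x) t :=
        (hexp2.const_mul ε).mul_const (psiA x)
      exact (((h1.add_const (F/(lam-σ))).add h2).hasDerivWithinAt).sub (hsol.deriv_t t ht x hx)
    case _ => -- positivity at t = 0
      intro x hx
      have h1 := hinit x hx
      have h3 : 0 < ε * psiA x := mul_pos hε (psiA_pos x)
      show (0:ℝ) < Real.exp (-σ*0) * M0 + F/(lam-σ) + ε * Real.exp (a*0) * psiA x - u x 0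
      simp only [mul_zero, Real.exp_zero, one_mul, mul_one]
      linarith
    case _ => -- boundary x = 0
      intro t ht
      show ε * Real.exp (a*t) * psiD 0 - ux 0 t < 0
      rw [hbc0 t ht.1, sub_zero]
      exact mul_neg_of_pos_of_neg (mul_pos hε (Real.exp_pos _)) psiD_zero_neg
    case _ => -- boundary x = 1
      intro t ht hZ1
      show (0:ℝ) < ε * Real.exp (a*t) * psiD 1 - ux 1 t
      rw [hbc1 t ht.1]
      have hE : 0 ≤ Real.exp (-σ*t) * M0 := mul_nonneg (Real.exp_pos _).le hM0
      have hP : 0 < ε * Real.exp (a*t) * psiA 1 :=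
        mul_pos (mul_pos hε (Real.exp_pos _)) (psiA_pos 1)
      have hu : 0 < u 1 t := by linarith
      have h1 : 0 < l * u 1 t := mul_pos hl hu
      have h2 : 0 < ε * Real.exp (a*t) * psiD 1 :=
        mul_pos (mul_pos hε (Real.exp_pos _)) psiD_one_pos
      linarith
    case _ => -- interior contradiction
      intro t ht x hx hZneg hZxx hZt
      have hpde := hsol.pde t ht.1 x hx
      have hfb' : f x t ≤ F := hfb x (Ioo_subset_Icc_self hx) t ⟨ht.1.le, ht.2⟩
      have hWid : (lam - σ) * (F/(lam-σ)) = F := by field_simp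
      have hE : 0 ≤ Real.exp (-σ*t) * M0 := mul_nonneg (Real.exp_pos _).le hM0
      have hP : 0 < ε * Real.exp (a*t) * psiA x :=
        mul_pos (mul_pos hε (Real.exp_pos _)) (psiA_pos x)
      have h1 : 0 ≤ a * (ε * Real.exp (a*t) * psiA x - uxx x t) := mul_nonneg ha.le hZxx
      have h2 : lam * (Real.exp (-σ*t) * M0 + F/(lam-σ) + ε * Real.exp (a*t) * psiA x - u x t) < 0 :=
        mul_neg_of_pos_of_neg hlam hZneg
      have h3 : 0 ≤ σ * (Real.exp (-σ*t) * M0) := mul_nonneg hσ.le hE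
      have h5 : 0 ≤ σ * (F/(lam-σ)) := mul_nonneg hσ.le hW
      have h6 : 0 < lam * (ε * Real.exp (a*t) * psiA x) := mul_pos hlam hP
      nlinarith [hpde, hWid, hfb', hZt, h1, h2, h3, h5, h6]
  -- pass to the limit ε → 0
  intro x hx
  refine le_of_forall_pos_le_add ?_
  intro η hη
  have hden : 0 < Real.exp (a*T) * psiA x := mul_pos (Real.exp_pos _) (psiA_pos x)
  have hε : 0 < η / (Real.exp (a*T) * psiA x) := div_pos hη hden
  have h := key _ hε x hx
  have heq : η / (Real.exp (a*T) * psiA x) * Real.exp (a*T) * psiA x = η := by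
    rw [mul_assoc, div_mul_cancel₀ η hden.ne']
  linarith

/-- Theorem 1: boundedness of the disturbance-estimation error system. -/
theorem stmt0
    (a lam l : ℝ) (ha : 0 < a) (hlam : 0 < lam) (hl : 0 < l)
    (f qt qtx qtxx qtt : ℝ → ℝ → ℝ) (qt0 : ℝ → ℝ)
    (hf : ContinuousOn (fun p : ℝ × ℝ => f p.1 p.2) (Set.Icc 0 1 ×ˢ Set.Ici 0))
    (hq0 : ContinuousOn qt0 (Set.Icc 0 1))
    (hsol : IsParabolicSol a lam f qt qtx qtxx qtt)
    (hbc0 : ∀ t > (0:ℝ), qtx 0 t = 0)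
    (hbc1 : ∀ t > (0:ℝ), qtx 1 t = -l * qt 1 t)
    (hic : ∀ x ∈ Set.Icc (0:ℝ) 1, qt x 0 = qt0 x) :
    ∀ σ ∈ Set.Ioo (0:ℝ) lam, ∀ t > (0:ℝ),
      supIcc01 (fun x => qt x t) ≤
        Real.exp (-σ * t) * supIcc01 qt0 + (1 / (lam - σ)) * supRect f t ∧
      |qt 0 t| ≤ Real.exp (-σ * t) * supIcc01 qt0 + (1 / (lam - σ)) * supRect f t := by
  intro σ hσ t ht
  have hls : 0 < lam - σ := by linarith [hσ.2]
  have hbdd0 : BddAbove ((fun x => |qt0 x|) '' Set.Icc 0 1) :=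
    isCompact_Icc.bddAbove_image hq0.abs
  have hM0b : ∀ x ∈ Set.Icc (0:ℝ) 1, |qt0 x| ≤ supIcc01 qt0 := fun x hx =>
    le_csSup hbdd0 ⟨x, hx, rfl⟩
  have hM0 : 0 ≤ supIcc01 qt0 :=
    (abs_nonneg _).trans (hM0b 0 ⟨le_refl 0, zero_le_one⟩)
  have hfc : ContinuousOn (fun p : ℝ × ℝ => |f p.1 p.2|) (Set.Icc 0 1 ×ˢ Set.Icc 0 t) :=
    (hf.mono (Set.prod_mono Set.Subset.rfl Set.Icc_subset_Ici_self)).abs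
  have hbddF : BddAbove ((fun p : ℝ × ℝ => |f p.1 p.2|) '' (Set.Icc 0 1 ×ˢ Set.Icc 0 t)) :=
    (isCompact_Icc.prod isCompact_Icc).bddAbove_image hfc
  have hFb : ∀ x ∈ Set.Icc (0:ℝ) 1, ∀ s ∈ Set.Icc 0 t, |f x s| ≤ supRect f t := fun x hx s hs =>
    le_csSup hbddF ⟨(x, s), ⟨hx, hs⟩, rfl⟩
  have hF : 0 ≤ supRect f t :=
    (abs_nonneg _).trans (hFb 0 ⟨le_refl 0, zero_le_one⟩ 0 ⟨le_refl 0, ht.le⟩)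
  -- upper bound
  have hup := comparison ha hl hσ.1 hσ.2 ht hsol hbc0 hbc1 hM0 hF
    (fun x hx => by rw [hic x hx]; exact (le_abs_self _).trans (hM0b x hx))
    (fun x hx s hs => (le_abs_self _).trans (hFb x hx s hs))
  -- negated solution
  have hsoln : IsParabolicSol a lam (fun x s => -f x s) (fun x s => -qt x s)
      (fun x s => -qtx x s) (fun x s => -qtxx x s) (fun x s => -qtt x s) := by
    constructor
    · exact hsol.cont_u.neg
    · exact hsol.cont_ux.neg
    · exact hsol.cont_ut.neg
    · exact hsol.cont_uxx.neg
    · exact fun t ht x hx => (hsol.deriv_x t ht x hx).neg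
    · exact fun t ht x hx => (hsol.deriv_xx t ht x hx).neg
    · exact fun t ht x hx => (hsol.deriv_t t ht x hx).neg
    · intro t ht x hx
      have h := hsol.pde t ht x hx
      show -qtt x t = a * -qtxx x t - lam * -qt x t + -f x t
      linarith [h]
  have hdn := comparison ha hl hσ.1 hσ.2 ht hsoln
    (fun s hs => by simp [hbc0 s hs])
    (fun s hs => by show -qtx 1 s = -l * -qt 1 s; rw [hbc1 s hs]; ring)
    hM0 hF
    (fun x hx => by show -qt x 0 ≤ _; rw [hic x hx]; exact (neg_le_abs _).trans (hM0b x hx))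
    (fun x hx s hs => (neg_le_abs (f x s)).trans (hFb x hx s hs))
  -- pointwise absolute bound
  have hBeq : supRect f t / (lam - σ) = 1 / (lam - σ) * supRect f t := by ring
  have habs : ∀ x ∈ Set.Icc (0:ℝ) 1, |qt x t| ≤
      Real.exp (-σ * t) * supIcc01 qt0 + 1 / (lam - σ) * supRect f t := by
    intro x hx
    have h1 := hup x hx
    have h2 := hdn x hx
    rw [abs_le]
    constructor <;> [linarith; linarith]
  refine ⟨?_, habs 0 ⟨le_refl 0, zero_le_one⟩⟩
  show sSup ((fun x => |qt x t|) '' Set.Icc 0 1) ≤ _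
  refine csSup_le ⟨|qt 0 t|, ⟨0, ⟨le_refl 0, zero_le_one⟩, rfl⟩⟩ ?_
  rintro b ⟨x, hx, rfl⟩
  exact habs x hx
end

section
/- Let N ≥ 2 be an integer, α > 0, l > 0, and k₁,…,k_N ∈ (0,l). Let B be the N×N real matrix with B_{ii} = −l for all i, B_{i,i−1} = k_i for i = 2,…,N, B_{1,N} = k₁, and all other entries zero. Let φ₁,…,φ_N : [0,1] → ℝ be twice continuously differentiable functions with φ_i(0) = 0 for all i and with the boundary condition Φ'(1) = B Φ(1), where Φ(x) := (φ₁(x),…,φ_N(x))ᵀ. Then Σ_{i=1}^N α ∫₀¹ φ_i''(x) φ_i(x) dx ≤ 0. -/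
/-- The cyclic coupling matrix of the directed-cycle topology: diagonal entries `-l`,
entries `k i` in position `(i, i-1)` (indices cyclic in `Fin N`, so row `0` has `k 0`
in the last column), zeros elsewhere. -/
def cycB (N : ℕ) [NeZero N] (l : ℝ) (k : Fin N → ℝ) : Matrix (Fin N) (Fin N) ℝ :=
  fun i j => if j = i then -l else if j = i - 1 then k i else 0

/-- Dissipativity of the operator `𝒜Ψ = diag(αψᵢ'')` with boundary conditions
`Φ(0) = 0`, `Φ'(1) = BΦ(1)`. -/
theorem stmt5 (N : ℕ) [NeZero N] (hN : 2 ≤ N) (a l : ℝ) (ha : 0 < a) (hl : 0 < l)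
    (k : Fin N → ℝ) (hk : ∀ i, k i ∈ Set.Ioo 0 l)
    (φ φ' φ'' : Fin N → ℝ → ℝ)
    (hd1 : ∀ i, ∀ x ∈ Set.Icc (0:ℝ) 1, HasDerivWithinAt (φ i) (φ' i x) (Set.Icc 0 1) x)
    (hd2 : ∀ i, ∀ x ∈ Set.Icc (0:ℝ) 1, HasDerivWithinAt (φ' i) (φ'' i x) (Set.Icc 0 1) x)
    (hc2 : ∀ i, ContinuousOn (φ'' i) (Set.Icc 0 1))
    (hbc0 : ∀ i, φ i 0 = 0)
    (hbc1 : ∀ i, φ' i 1 = ∑ j, cycB N l k i j * φ j 1) :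
    ∑ i, a * ∫ x in (0:ℝ)..1, φ'' i x * φ i x ≤ 0 := by
  have huIcc : Set.uIcc (0:ℝ) 1 = Set.Icc 0 1 := Set.uIcc_of_le zero_le_one
  -- continuity facts
  have hc0 : ∀ i, ContinuousOn (φ i) (Set.Icc (0:ℝ) 1) :=
    fun i x hx => (hd1 i x hx).continuousWithinAt
  have hc1 : ∀ i, ContinuousOn (φ' i) (Set.Icc (0:ℝ) 1) :=
    fun i x hx => (hd2 i x hx).continuousWithinAt
  have hint2 : ∀ i, IntervalIntegrable (φ'' i) MeasureTheory.volume 0 1 := fun i =>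
    ContinuousOn.intervalIntegrable (by rw [huIcc]; exact hc2 i)
  have hint1 : ∀ i, IntervalIntegrable (φ' i) MeasureTheory.volume 0 1 := fun i =>
    ContinuousOn.intervalIntegrable (by rw [huIcc]; exact hc1 i)
  -- integration by parts
  have hibp : ∀ i, (∫ x in (0:ℝ)..1, φ'' i x * φ i x) =
      φ' i 1 * φ i 1 - ∫ x in (0:ℝ)..1, φ' i x * φ' i x := by
    intro i
    have h := intervalIntegral.integral_deriv_mul_eq_sub_of_hasDerivWithinAt
      (u := φ' i) (v := φ i) (u' := φ'' i) (v' := φ' i) (a := (0:ℝ)) (b := 1)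
      (by rw [huIcc]; exact hd2 i) (by rw [huIcc]; exact hd1 i) (hint2 i) (hint1 i)
    rw [hbc0 i, mul_zero, sub_zero] at h
    have hsum : (∫ x in (0:ℝ)..1, φ'' i x * φ i x + φ' i x * φ' i x)
        = (∫ x in (0:ℝ)..1, φ'' i x * φ i x) + ∫ x in (0:ℝ)..1, φ' i x * φ' i x :=
      intervalIntegral.integral_add
        ((hint2 i).mul_continuousOn (by rw [huIcc]; exact hc0 i))
        ((hint1 i).mul_continuousOn (by rw [huIcc]; exact hc1 i))
    rw [hsum] at h
    linarith
  -- the integral of φ'^2 is nonnegative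
  have hsq : ∀ i, (0:ℝ) ≤ ∫ x in (0:ℝ)..1, φ' i x * φ' i x := fun i =>
    intervalIntegral.integral_nonneg zero_le_one (fun x _ => mul_self_nonneg _)
  -- boundary term computation
  have h1ne0 : (1 : Fin N) ≠ 0 := by
    have : ((1 : Fin N) : ℕ) = 1 := by
      rw [Fin.val_one']; exact Nat.mod_eq_of_lt hN
    intro h; rw [h] at this; simp at this
  have hne : ∀ i : Fin N, i - 1 ≠ i := by
    intro i h
    apply h1ne0
    have := sub_eq_iff_eq_add.mp h
    have : i + 0 = i + 1 := by rw [add_zero]; exact this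
    exact (add_left_cancel this).symm
  have hrow : ∀ i, φ' i 1 = -l * φ i 1 + k i * φ (i - 1) 1 := by
    intro i
    rw [hbc1 i]
    have : ∀ j : Fin N, cycB N l k i j * φ j 1
        = (if j = i then -l * φ i 1 else 0) + (if j = i - 1 then k i * φ (i - 1) 1 else 0) := by
      intro j
      unfold cycB
      by_cases h1 : j = i
      · subst h1
        rw [if_pos rfl, if_pos rfl, if_neg (fun h => hne j h.symm), add_zero]
      · rw [if_neg h1, if_neg h1]
        by_cases h2 : j = i - 1
        · subst h2; rw [if_pos rfl, if_pos rfl, zero_add]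
        · rw [if_neg h2, if_neg h2, zero_mul, add_zero]
    rw [Finset.sum_congr rfl (fun j _ => this j), Finset.sum_add_distrib,
      Finset.sum_ite_eq' Finset.univ i, Finset.sum_ite_eq' Finset.univ (i - 1)]
    simp
  -- the quadratic form is nonpositive
  set x : Fin N → ℝ := fun i => φ i 1 with hx
  have hquad : ∑ i, φ' i 1 * φ i 1 ≤ 0 := by
    have step1 : ∑ i, φ' i 1 * φ i 1
        = ∑ i, (-l * x i * x i + k i * (x (i - 1) * x i)) := by
      refine Finset.sum_congr rfl fun i _ => ?_
      rw [hrow i]; ring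
    rw [step1]
    have step2 : ∀ i : Fin N, -l * x i * x i + k i * (x (i - 1) * x i)
        ≤ -l * (x i * x i) + k i / 2 * (x (i-1) * x (i-1)) + k i / 2 * (x i * x i) := by
      intro i
      have hki : 0 < k i := (hk i).1
      have hsq : x (i-1) * x i ≤ (x (i-1) * x (i-1) + x i * x i) / 2 := by nlinarith [sq_nonneg (x (i-1) - x i)]
      nlinarith
    calc ∑ i, (-l * x i * x i + k i * (x (i - 1) * x i))
        ≤ ∑ i, (-l * (x i * x i) + k i / 2 * (x (i-1) * x (i-1)) + k i / 2 * (x i * x i)) :=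
          Finset.sum_le_sum fun i _ => step2 i
      _ = ∑ i, (-l * (x i * x i) + k i / 2 * (x i * x i)) + ∑ i, k i / 2 * (x (i-1) * x (i-1)) := by
          rw [← Finset.sum_add_distrib]; refine Finset.sum_congr rfl fun i _ => ?_; ring
      _ = ∑ i, (-l * (x i * x i) + k i / 2 * (x i * x i)) + ∑ i, k (i+1) / 2 * (x i * x i) := by
          congr 1
          exact Fintype.sum_equiv (Equiv.subRight (1 : Fin N)) _ _ (fun i => by simp)
      _ = ∑ i, (-l + k i / 2 + k (i+1) / 2) * (x i * x i) := by
          rw [← Finset.sum_add_distrib]; refine Finset.sum_congr rfl fun i _ => ?_; ring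
      _ ≤ 0 := by
          apply Finset.sum_nonpos
          intro i _
          apply mul_nonpos_of_nonpos_of_nonneg _ (mul_self_nonneg _)
          have := (hk i).2; have := (hk (i+1)).2
          linarith
  -- put everything together
  have : ∑ i, a * ∫ x in (0:ℝ)..1, φ'' i x * φ i x = a * ∑ i, ∫ x in (0:ℝ)..1, φ'' i x * φ i x := by
    rw [Finset.mul_sum]
  rw [this]
  apply mul_nonpos_of_nonneg_of_nonpos ha.le
  calc ∑ i, ∫ x in (0:ℝ)..1, φ'' i x * φ i x
      = ∑ i, (φ' i 1 * φ i 1 - ∫ x in (0:ℝ)..1, φ' i x * φ' i x) :=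
        Finset.sum_congr rfl fun i _ => hibp i
    _ ≤ ∑ i, φ' i 1 * φ i 1 := Finset.sum_le_sum fun i _ => by linarith [hsq i]
    _ ≤ 0 := hquad
end

section
/- Let N ≥ 2 be an integer, l > 0, k₁,…,k_N ∈ (0,l), and let B be the N×N real matrix with B_{ii} = −l for all i, B_{i,i−1} = k_i for i = 2,…,N, B_{1,N} = k₁, and all other entries zero. Then for every γ > 0 the matrix M := γ cosh(γ) I − sinh(γ) B satisfies det(M) > 0; in particular M is invertible. -/
open Finset

theorem Matrix.det_pos_of_sum_row_lt_diag {n : Type*} [Fintype n] [DecidableEq n]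
    {A : Matrix n n ℝ} (h : ∀ i, ∑ j ∈ univ.erase i, |A i j| < A i i) : 0 < A.det := by
  have hdiag_pos : ∀ i, 0 < A i i := fun i => (sum_nonneg fun j _ => abs_nonneg _).trans_lt (h i)
  set P : ℝ → Matrix n n ℝ := fun t i j => if i = j then A i i else t * A i j
  have hP_cont : Continuous fun t => (P t).det :=
    Continuous.matrix_det <| continuous_pi fun i => continuous_pi fun j => by
      by_cases hij : i = j <;> simp only [P, hij, if_true, if_false] <;> fun_prop
  have hP_zero : P 0 = Matrix.diagonal fun i => A i i := by
    ext i j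
    by_cases hij : i = j <;> simp [P, hij]
  have hP_one : P 1 = A := by
    ext i j
    by_cases hij : i = j <;> simp [P, hij]
  have hP_ne : ∀ t ∈ Set.Icc (0 : ℝ) 1, (P t).det ≠ 0 := fun t ht =>
    det_ne_zero_of_sum_row_lt_diag fun i => by
      have hsum : ∑ j ∈ univ.erase i, ‖P t i j‖ = t * ∑ j ∈ univ.erase i, |A i j| := by
        rw [mul_sum]
        refine sum_congr rfl fun j hj => ?_
        simp [P, Ne.symm (ne_of_mem_erase hj), abs_of_nonneg ht.1]
      rw [hsum]
      simp only [P, if_true, Real.norm_eq_abs, abs_of_pos (hdiag_pos i)]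
      exact (mul_le_of_le_one_left (sum_nonneg fun j _ => abs_nonneg _) ht.2).trans_lt (h i)
  have hP_zero_det_pos : 0 < (P 0).det := by
    rw [hP_zero, det_diagonal]
    exact prod_pos fun i _ => hdiag_pos i
  by_contra! hA
  obtain ⟨t, ht, hzero⟩ := intermediate_value_Icc' zero_le_one hP_cont.continuousOn
    ⟨hP_one ▸ hA, hP_zero_det_pos.le⟩
  exact hP_ne t ht hzero

theorem sum_abs_cycB_erase_le (N : ℕ) [NeZero N] (l : ℝ) (k : Fin N → ℝ) (i : Fin N) :
    ∑ j ∈ univ.erase i, |cycB N l k i j| ≤ |k i| := by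
  have hrow : ∀ j ∈ univ.erase i, |cycB N l k i j| = if i - 1 = j then |k i| else 0 :=
    fun j hj => by
      simp [cycB, ne_of_mem_erase hj, eq_comm (a := j), apply_ite (|·|)]
  rw [sum_congr rfl hrow, sum_ite_eq]
  split_ifs <;> simp

theorem sum_row_lt_diag_smul_one_sub_smul_cycB (N : ℕ) [NeZero N] (l : ℝ) (k : Fin N → ℝ)
    (hk : ∀ i, |k i| ≤ l) {c s : ℝ} (hc : 0 < c) (hs : 0 ≤ s) (i : Fin N) :
    ∑ j ∈ univ.erase i, |(c • 1 - s • cycB N l k) i j| < (c • 1 - s • cycB N l k) i i := by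
  have hoff : ∀ j ∈ univ.erase i, |(c • 1 - s • cycB N l k) i j| = s * |cycB N l k i j| :=
    fun j hj => by
      simp [Matrix.one_apply_ne (ne_of_mem_erase hj).symm, abs_mul, abs_of_nonneg hs]
  have hdiag : (c • 1 - s • cycB N l k) i i = c + s * l := by
    simp [cycB]
  rw [sum_congr rfl hoff, ← mul_sum, hdiag]
  linarith [mul_le_mul_of_nonneg_left ((sum_abs_cycB_erase_le N l k i).trans (hk i)) hs]

theorem stmt7_general (N : ℕ) [NeZero N] (l : ℝ)
    (k : Fin N → ℝ) (hk : ∀ i, k i ∈ Set.Ioo 0 l) (γ : ℝ) (hγ : 0 < γ) :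
    0 < Matrix.det
        ((γ * Real.cosh γ) • (1 : Matrix (Fin N) (Fin N) ℝ) - Real.sinh γ • cycB N l k) ∧
      IsUnit
        ((γ * Real.cosh γ) • (1 : Matrix (Fin N) (Fin N) ℝ) - Real.sinh γ • cycB N l k) := by
  have hk_abs : ∀ i, |k i| ≤ l := fun i => (abs_of_pos (hk i).1).trans_le (hk i).2.le
  have hdet := Matrix.det_pos_of_sum_row_lt_diag <|
    sum_row_lt_diag_smul_one_sub_smul_cycB N l k hk_abs (mul_pos hγ (Real.cosh_pos γ))
      (Real.sinh_nonneg_iff.2 hγ.le)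
  exact ⟨hdet, (Matrix.isUnit_iff_isUnit_det _).2 hdet.ne'.isUnit⟩

/-- Positivity of `det(γ cosh(γ) I − sinh(γ) B)` and invertibility of this matrix,
for gains `kᵢ ∈ (0,l)`. -/
theorem stmt7 (N : ℕ) [NeZero N] (hN : 2 ≤ N) (l : ℝ) (hl : 0 < l)
    (k : Fin N → ℝ) (hk : ∀ i, k i ∈ Set.Ioo 0 l) (γ : ℝ) (hγ : 0 < γ) :
    0 < Matrix.det
        ((γ * Real.cosh γ) • (1 : Matrix (Fin N) (Fin N) ℝ) - Real.sinh γ • cycB N l k) ∧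
      IsUnit
        ((γ * Real.cosh γ) • (1 : Matrix (Fin N) (Fin N) ℝ) - Real.sinh γ • cycB N l k) :=
  stmt7_general N l k hk γ hγ
end

section
/- Let N ≥ 2 be an integer, α > 0, γ := 1/√α, l > 0, k₁,…,k_N ∈ (0,l), and let B be the N×N real matrix with B_{ii} = −l, B_{i,i−1} = k_i for i = 2,…,N, B_{1,N} = k₁, and zeros elsewhere. Let Γ : [0,1] → ℝ^N be continuous, set Φ_p(x) := −∫₀ˣ (sinh(γ(x−s))/(αγ)) Γ(s) ds, and set M := γ cosh(γ) I − sinh(γ) B (which is invertible). Define Φ(x) := Φ_p(x) + sinh(γx) · M⁻¹ (B Φ_p(1) − Φ_p'(1)). Then Φ is twice continuously differentiable on [0,1] and satisfies −α Φ''(x) + Φ(x) = Γ(x) for all x ∈ [0,1], Φ(0) = 0, and Φ'(1) = B Φ(1). -/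
open Matrix

/-- The particular solution `Φ_p(x) = −∫₀ˣ (sinh(γ(x−s))/(αγ)) Γ(s) ds`. -/
noncomputable def Phip (N : ℕ) (a γ : ℝ) (Γ : ℝ → Fin N → ℝ) (x : ℝ) : Fin N → ℝ :=
  -∫ s in (0:ℝ)..x, (Real.sinh (γ * (x - s)) / (a * γ)) • Γ s

/-- Its derivative `Φ_p'(x) = −∫₀ˣ (cosh(γ(x−s))/α) Γ(s) ds`. -/
noncomputable def Phip' (N : ℕ) (a γ : ℝ) (Γ : ℝ → Fin N → ℝ) (x : ℝ) : Fin N → ℝ :=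
  -∫ s in (0:ℝ)..x, (Real.cosh (γ * (x - s)) / a) • Γ s

/-- `M := γ cosh(γ) I − sinh(γ) B`. -/
noncomputable def resMat (N : ℕ) [NeZero N] (l γ : ℝ) (k : Fin N → ℝ) :
    Matrix (Fin N) (Fin N) ℝ :=
  (γ * Real.cosh γ) • (1 : Matrix (Fin N) (Fin N) ℝ) - Real.sinh γ • cycB N l k

/-- The explicit solution `Φ(x) = Φ_p(x) + sinh(γx) M⁻¹ (BΦ_p(1) − Φ_p'(1))` of the
resolvent boundary value problem `−αΦ'' + Φ = Γ`, `Φ(0) = 0`, `Φ'(1) = BΦ(1)`. -/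
noncomputable def resSol (N : ℕ) [NeZero N] (a l γ : ℝ) (k : Fin N → ℝ)
    (Γ : ℝ → Fin N → ℝ) (x : ℝ) : Fin N → ℝ :=
  Phip N a γ Γ x +
    Real.sinh (γ * x) •
      ((resMat N l γ k)⁻¹ *ᵥ (cycB N l k *ᵥ Phip N a γ Γ 1 - Phip' N a γ Γ 1))

/-!
By the addition formulas, `Φ_p` and `Φ_p'` are combinations of `sinh (γ x)` and `cosh (γ x)` with
the integrals `∫₀ˣ cosh (γ s) Γ s` and `∫₀ˣ sinh (γ s) Γ s`, so the fundamental theorem of calculus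
gives `Φ_p'` as the derivative of `Φ_p` and `Φ_p'' = γ² Φ_p - Γ / α`. For every constant vector
`c` the term `sinh (γ x) c` solves the homogeneous equation and vanishes at `0`, and the boundary
condition `Φ'(1) = B Φ(1)` says exactly `M c = B Φ_p(1) - Φ_p'(1)`. The matrix `M` is invertible
because it is strictly diagonally dominant: row `i` has diagonal entry `γ cosh γ + l sinh γ` and a
single off-diagonal entry `-k_i sinh γ`.
-/

open Set MeasureTheory

lemma hasDerivWithinAt_integral_Icc {E : Type*} [NormedAddCommGroup E] [NormedSpace ℝ E]
    [CompleteSpace E] {f : ℝ → E} {a b x : ℝ} (hf : ContinuousOn f (Icc a b))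
    (hx : x ∈ Icc a b) :
    HasDerivWithinAt (fun u => ∫ s in a..u, f s) (f x) (Icc a b) x := by
  have : Fact (x ∈ Icc a b) := ⟨hx⟩
  have hsub : uIcc a x ⊆ Icc a b := by rw [uIcc_of_le hx.1]; exact Icc_subset_Icc_right hx.2
  exact intervalIntegral.integral_hasDerivWithinAt_right (hf.mono hsub).intervalIntegrable
    ⟨Icc a b, self_mem_nhdsWithin, hf.aestronglyMeasurable measurableSet_Icc⟩ (hf x hx)

theorem Matrix.add_smul_nonsing_inv_mulVec_eq {n R : Type*} [Fintype n] [DecidableEq n]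
    [CommRing R] (B : Matrix n n R) (t s : R) (h : IsUnit (t • 1 - s • B).det) (p q : n → R) :
    q + t • ((t • 1 - s • B)⁻¹ *ᵥ (B *ᵥ p - q)) =
      B *ᵥ (p + s • ((t • 1 - s • B)⁻¹ *ᵥ (B *ᵥ p - q))) := by
  set c := (t • 1 - s • B)⁻¹ *ᵥ (B *ᵥ p - q)
  have hc : (t • 1 - s • B) *ᵥ c = B *ᵥ p - q := by
    rw [mulVec_mulVec, mul_nonsing_inv _ h, one_mulVec]
  rw [sub_mulVec, smul_mulVec, smul_mulVec, one_mulVec] at hc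
  rw [mulVec_add, mulVec_smul]
  linear_combination (norm := module) hc

section resMat

variable {N : ℕ} [NeZero N] {l γ : ℝ} {k : Fin N → ℝ}

lemma resMat_apply_self (i : Fin N) :
    resMat N l γ k i i = γ * Real.cosh γ + Real.sinh γ * l := by
  simp [resMat, cycB]

lemma resMat_apply_of_ne {i j : Fin N} (h : j ≠ i) :
    resMat N l γ k i j = -(Real.sinh γ * if j = i - 1 then k i else 0) := by
  simp [resMat, cycB, h, Ne.symm h]

theorem isUnit_resMat (hγ : 0 < γ) (hk : ∀ i, |k i| ≤ l) : IsUnit (resMat N l γ k) := by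
  refine (isUnit_iff_isUnit_det _).2 (isUnit_iff_ne_zero.2
    (det_ne_zero_of_sum_row_lt_diag fun i => ?_))
  have hsinh : 0 < Real.sinh γ := Real.sinh_pos_iff.2 hγ
  have hl : 0 ≤ l := (abs_nonneg _).trans (hk i)
  calc ∑ j ∈ Finset.univ.erase i, ‖resMat N l γ k i j‖
      = ∑ j ∈ Finset.univ.erase i, Real.sinh γ * ‖if j = i - 1 then k i else 0‖ :=
        Finset.sum_congr rfl fun j hj => by
          rw [resMat_apply_of_ne (Finset.ne_of_mem_erase hj), norm_neg, norm_mul,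
            Real.norm_of_nonneg hsinh.le]
    _ ≤ ∑ j, Real.sinh γ * ‖if j = i - 1 then k i else 0‖ :=
        Finset.sum_le_sum_of_subset_of_nonneg (Finset.erase_subset _ _) fun _ _ _ => by
          positivity
    _ = Real.sinh γ * |k i| := by simp [apply_ite]
    _ ≤ Real.sinh γ * l := by gcongr; exact hk i
    _ < γ * Real.cosh γ + Real.sinh γ * l := by
        linarith [mul_pos hγ (Real.cosh_pos γ)]
    _ = ‖resMat N l γ k i i‖ := by
        rw [resMat_apply_self, Real.norm_of_nonneg (by positivity)]

end resMat

section Phip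

variable {N : ℕ} {a γ b x : ℝ} {Γ : ℝ → Fin N → ℝ}

lemma Phip_eq (hΓ : IntervalIntegrable Γ volume 0 x) :
    Phip N a γ Γ x = (a * γ)⁻¹ • (Real.cosh (γ * x) • (∫ s in (0:ℝ)..x, Real.sinh (γ * s) • Γ s)
      - Real.sinh (γ * x) • ∫ s in (0:ℝ)..x, Real.cosh (γ * s) • Γ s) := by
  have hsplit (s : ℝ) : (Real.sinh (γ * (x - s)) / (a * γ)) • Γ s =
      (Real.sinh (γ * x) / (a * γ) * Real.cosh (γ * s)) • Γ s
        - (Real.cosh (γ * x) / (a * γ) * Real.sinh (γ * s)) • Γ s := by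
    rw [← sub_smul, mul_sub, Real.sinh_sub]
    ring_nf
  rw [Phip, intervalIntegral.integral_congr fun s _ => hsplit s, intervalIntegral.integral_sub
    (hΓ.continuousOn_smul (by fun_prop)) (hΓ.continuousOn_smul (by fun_prop))]
  simp only [mul_smul, intervalIntegral.integral_smul]
  module

lemma Phip'_eq (hΓ : IntervalIntegrable Γ volume 0 x) :
    Phip' N a γ Γ x = a⁻¹ • (Real.sinh (γ * x) • (∫ s in (0:ℝ)..x, Real.sinh (γ * s) • Γ s)
      - Real.cosh (γ * x) • ∫ s in (0:ℝ)..x, Real.cosh (γ * s) • Γ s) := by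
  have hsplit (s : ℝ) : (Real.cosh (γ * (x - s)) / a) • Γ s =
      (Real.cosh (γ * x) / a * Real.cosh (γ * s)) • Γ s
        - (Real.sinh (γ * x) / a * Real.sinh (γ * s)) • Γ s := by
    rw [← sub_smul, mul_sub, Real.cosh_sub]
    ring_nf
  rw [Phip', intervalIntegral.integral_congr fun s _ => hsplit s, intervalIntegral.integral_sub
    (hΓ.continuousOn_smul (by fun_prop)) (hΓ.continuousOn_smul (by fun_prop))]
  simp only [mul_smul, intervalIntegral.integral_smul]
  module


lemma hasDerivWithinAt_Phip (hγ : γ ≠ 0) (hΓ : ContinuousOn Γ (Icc 0 b)) (hx : x ∈ Icc 0 b) :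
    HasDerivWithinAt (Phip N a γ Γ) (Phip' N a γ Γ x) (Icc 0 b) x := by
  have hint (y : ℝ) (hy : y ∈ Icc 0 b) : IntervalIntegrable Γ volume 0 y :=
    (hΓ.mono (Icc_subset_Icc_right hy.2)).intervalIntegrable_of_Icc hy.1
  have hC := hasDerivWithinAt_integral_Icc (f := fun s => Real.cosh (γ * s) • Γ s)
    (by fun_prop) hx
  have hS := hasDerivWithinAt_integral_Icc (f := fun s => Real.sinh (γ * s) • Γ s)
    (by fun_prop) hx
  have hcosh := ((hasDerivAt_const_mul γ).cosh (x := x)).hasDerivWithinAt (s := Icc 0 b)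
  have hsinh := ((hasDerivAt_const_mul γ).sinh (x := x)).hasDerivWithinAt (s := Icc 0 b)
  refine ((((hcosh.smul hS).sub (hsinh.smul hC)).const_smul (a * γ)⁻¹).congr
    (fun y hy => Phip_eq (hint y hy)) (Phip_eq (hint x hx))).congr_deriv ?_
  rw [Phip'_eq (hint x hx)]
  match_scalars <;> field_simp
  ring

lemma hasDerivWithinAt_Phip' (hγ : γ ≠ 0) (hΓ : ContinuousOn Γ (Icc 0 b)) (hx : x ∈ Icc 0 b) :
    HasDerivWithinAt (Phip' N a γ Γ) (γ ^ 2 • Phip N a γ Γ x - a⁻¹ • Γ x) (Icc 0 b) x := by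
  have hint (y : ℝ) (hy : y ∈ Icc 0 b) : IntervalIntegrable Γ volume 0 y :=
    (hΓ.mono (Icc_subset_Icc_right hy.2)).intervalIntegrable_of_Icc hy.1
  have hC := hasDerivWithinAt_integral_Icc (f := fun s => Real.cosh (γ * s) • Γ s)
    (by fun_prop) hx
  have hS := hasDerivWithinAt_integral_Icc (f := fun s => Real.sinh (γ * s) • Γ s)
    (by fun_prop) hx
  have hcosh := ((hasDerivAt_const_mul γ).cosh (x := x)).hasDerivWithinAt (s := Icc 0 b)
  have hsinh := ((hasDerivAt_const_mul γ).sinh (x := x)).hasDerivWithinAt (s := Icc 0 b)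
  refine ((((hsinh.smul hS).sub (hcosh.smul hC)).const_smul a⁻¹).congr
    (fun y hy => Phip'_eq (hint y hy)) (Phip'_eq (hint x hx))).congr_deriv ?_
  rw [Phip_eq (hint x hx)]
  match_scalars <;> field_simp
  linear_combination (-a⁻¹) * Real.cosh_sq_sub_sinh_sq (γ * x)

end Phip

theorem stmt9_general (N : ℕ) [NeZero N] (a l : ℝ) (ha : 0 < a)
    (k : Fin N → ℝ) (hk : ∀ i, k i ∈ Set.Ioo 0 l)
    (Γ : ℝ → Fin N → ℝ) (hΓ : ContinuousOn Γ (Set.Icc 0 1)) :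
    IsUnit (resMat N l (1 / Real.sqrt a) k) ∧
    resSol N a l (1 / Real.sqrt a) k Γ 0 = 0 ∧
    ∃ D1 D2 : ℝ → Fin N → ℝ,
      ContinuousOn D1 (Set.Icc 0 1) ∧ ContinuousOn D2 (Set.Icc 0 1) ∧
      (∀ x ∈ Set.Icc (0:ℝ) 1,
          HasDerivWithinAt (resSol N a l (1 / Real.sqrt a) k Γ) (D1 x) (Set.Icc 0 1) x) ∧
      (∀ x ∈ Set.Icc (0:ℝ) 1, HasDerivWithinAt D1 (D2 x) (Set.Icc 0 1) x) ∧
      (∀ x ∈ Set.Icc (0:ℝ) 1,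
          -a • D2 x + resSol N a l (1 / Real.sqrt a) k Γ x = Γ x) ∧
      D1 1 = cycB N l k *ᵥ resSol N a l (1 / Real.sqrt a) k Γ 1 := by
  set γ := 1 / Real.sqrt a with hγ_def
  have hγ : 0 < γ := by positivity
  have haγ : a * γ ^ 2 = 1 := by
    rw [hγ_def, div_pow, Real.sq_sqrt ha.le]; field_simp
  have hM : IsUnit (resMat N l γ k) :=
    isUnit_resMat hγ fun i => (abs_of_pos (hk i).1).trans_le (hk i).2.le
  set c := (resMat N l γ k)⁻¹ *ᵥ (cycB N l k *ᵥ Phip N a γ Γ 1 - Phip' N a γ Γ 1)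
  set Φ := resSol N a l γ k Γ
  set D1 := fun x => Phip' N a γ Γ x + (γ * Real.cosh (γ * x)) • c
  have hΦ (x : ℝ) (hx : x ∈ Icc 0 1) : HasDerivWithinAt Φ (D1 x) (Icc 0 1) x :=
    (hasDerivWithinAt_Phip hγ.ne' hΓ hx).add
      ((((hasDerivAt_const_mul γ).sinh).hasDerivWithinAt.smul_const c).congr_deriv
        (by rw [mul_comm]))
  have hΦc : ContinuousOn Φ (Icc 0 1) := fun x hx => (hΦ x hx).continuousWithinAt
  have hD1 (x : ℝ) (hx : x ∈ Icc 0 1) :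
      HasDerivWithinAt D1 (γ ^ 2 • Φ x - a⁻¹ • Γ x) (Icc 0 1) x := by
    refine ((hasDerivWithinAt_Phip' hγ.ne' hΓ hx).add
      ((((hasDerivAt_const_mul γ).cosh).const_mul γ).hasDerivWithinAt.smul_const c)).congr_deriv ?_
    simp only [Φ, resSol]
    module
  refine ⟨hM, by simp [Φ, resSol, Phip], D1, fun x => γ ^ 2 • Φ x - a⁻¹ • Γ x,
    fun x hx => (hD1 x hx).continuousWithinAt,
    (hΦc.fun_const_smul _).fun_sub (hΓ.fun_const_smul _), hΦ, hD1, fun x _ => ?_, ?_⟩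
  · simp only [smul_sub, smul_smul, neg_mul, haγ, mul_inv_cancel₀ ha.ne', neg_smul, one_smul]
    abel
  · simpa only [D1, Φ, c, resSol, resMat, mul_one] using
      Matrix.add_smul_nonsing_inv_mulVec_eq (cycB N l k) _ _
        ((isUnit_iff_isUnit_det _).1 hM) (Phip N a γ Γ 1) (Phip' N a γ Γ 1)

theorem stmt9 (N : ℕ) [NeZero N] (hN : 2 ≤ N) (a l : ℝ) (ha : 0 < a) (hl : 0 < l)
    (k : Fin N → ℝ) (hk : ∀ i, k i ∈ Set.Ioo 0 l)
    (Γ : ℝ → Fin N → ℝ) (hΓ : ContinuousOn Γ (Set.Icc 0 1)) :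
    IsUnit (resMat N l (1 / Real.sqrt a) k) ∧
    resSol N a l (1 / Real.sqrt a) k Γ 0 = 0 ∧
    ∃ D1 D2 : ℝ → Fin N → ℝ,
      ContinuousOn D1 (Set.Icc 0 1) ∧ ContinuousOn D2 (Set.Icc 0 1) ∧
      (∀ x ∈ Set.Icc (0:ℝ) 1,
          HasDerivWithinAt (resSol N a l (1 / Real.sqrt a) k Γ) (D1 x) (Set.Icc 0 1) x) ∧
      (∀ x ∈ Set.Icc (0:ℝ) 1, HasDerivWithinAt D1 (D2 x) (Set.Icc 0 1) x) ∧
      (∀ x ∈ Set.Icc (0:ℝ) 1,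
          -a • D2 x + resSol N a l (1 / Real.sqrt a) k Γ x = Γ x) ∧
      D1 1 = cycB N l k *ᵥ resSol N a l (1 / Real.sqrt a) k Γ 1 :=
  stmt9_general N a l ha k hk Γ hΓ
end

section
/- Let α>0, λ>0, l>0, σ ∈ (0,λ), T>0. Let f be continuous on [0,1]×[0,T], let g₀, g₁ be continuous on [0,T], and let u be a classical solution on [0,1]×[0,T] of u_t = α u_xx − λ u + f on (0,1)×(0,T), with u(0,t) = g₀(t), u_x(1,t) = −l u(1,t) + g₁(t) for all t ∈ (0,T), and initial datum u₀ ∈ C([0,1]). Then for every t ∈ (0,T), ‖e^{σt} u(·,t)‖_{C([0,1])} ≤ ‖u₀‖_{C([0,1])} + (1/(λ−σ)) max_{(x,s)∈[0,1]×[0,T]} |e^{σs} f(x,s)| + (1/l) max_{s∈[0,T]} |e^{σs} g₁(s)| + max_{s∈[0,T]} |e^{σs} g₀(s)|. -/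
/-- `u` is a classical solution on `[0,1] × [0,T]` of `u_t = a u_xx - lam u + f`. -/
structure IsParabolicSolOn (T a lam : ℝ) (f u ux uxx ut : ℝ → ℝ → ℝ) : Prop where
  cont_u : ContinuousOn (fun p : ℝ × ℝ => u p.1 p.2) (Set.Icc 0 1 ×ˢ Set.Icc 0 T)
  cont_ux : ContinuousOn (fun p : ℝ × ℝ => ux p.1 p.2) (Set.Icc 0 1 ×ˢ Set.Ioo 0 T)
  cont_ut : ContinuousOn (fun p : ℝ × ℝ => ut p.1 p.2) (Set.Ioo 0 1 ×ˢ Set.Ioo 0 T)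
  cont_uxx : ContinuousOn (fun p : ℝ × ℝ => uxx p.1 p.2) (Set.Ioo 0 1 ×ˢ Set.Ioo 0 T)
  deriv_x : ∀ t ∈ Set.Ioo (0:ℝ) T, ∀ x ∈ Set.Icc (0:ℝ) 1,
      HasDerivWithinAt (fun y => u y t) (ux x t) (Set.Icc 0 1) x
  deriv_xx : ∀ t ∈ Set.Ioo (0:ℝ) T, ∀ x ∈ Set.Ioo (0:ℝ) 1,
      HasDerivWithinAt (fun y => ux y t) (uxx x t) (Set.Ioo 0 1) x
  deriv_t : ∀ t ∈ Set.Ioo (0:ℝ) T, ∀ x ∈ Set.Ioo (0:ℝ) 1,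
      HasDerivWithinAt (fun s => u x s) (ut x t) (Set.Ioo 0 T) t
  pde : ∀ t ∈ Set.Ioo (0:ℝ) T, ∀ x ∈ Set.Ioo (0:ℝ) 1,
      ut x t = a * uxx x t - lam * u x t + f x t

set_option maxHeartbeats 1000000

open Set Real in
lemma deriv_nonneg_of_max {φ : ℝ → ℝ} {s : Set ℝ} {p c q : ℝ}
    (hmax : IsMaxOn φ s p) (hφ : HasDerivWithinAt φ c s p)
    (hq : q < p) (hseg : Set.Icc q p ⊆ s) : 0 ≤ c := by
  have hy : q - p ∈ posTangentConeAt s p := by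
    apply sub_mem_posTangentConeAt_of_segment_subset
    rw [segment_eq_Icc']
    simpa [inf_eq_right.mpr hq.le, sup_eq_left.mpr hq.le] using hseg
  have := hmax.localize.hasFDerivWithinAt_nonpos hφ.hasFDerivWithinAt hy
  simp [ContinuousLinearMap.smulRight_apply, smul_eq_mul] at this
  nlinarith

set_option maxHeartbeats 1000000 in
lemma oneSided
    (a lam l σ T : ℝ) (ha : 0 < a) (hl : 0 < l)
    (hσ : σ ∈ Set.Ioo 0 lam) (hT : 0 < T)
    (f u ux uxx ut : ℝ → ℝ → ℝ) (g₀ g₁ u₀ : ℝ → ℝ)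
    (hsol : IsParabolicSolOn T a lam f u ux uxx ut)
    (hbc0 : ∀ t ∈ Set.Ioo (0:ℝ) T, u 0 t = g₀ t)
    (hbc1 : ∀ t ∈ Set.Ioo (0:ℝ) T, ux 1 t = -l * u 1 t + g₁ t)
    (hic : ∀ x ∈ Set.Icc (0:ℝ) 1, u x 0 = u₀ x)
    (M₀ F G₀ G₁ : ℝ)
    (hM₀ : ∀ x ∈ Set.Icc (0:ℝ) 1, u₀ x ≤ M₀)
    (hF : ∀ x ∈ Set.Icc (0:ℝ) 1, ∀ t ∈ Set.Icc (0:ℝ) T, Real.exp (σ * t) * f x t ≤ F)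
    (hG₀ : ∀ t ∈ Set.Icc (0:ℝ) T, Real.exp (σ * t) * g₀ t ≤ G₀)
    (hG₁ : ∀ t ∈ Set.Icc (0:ℝ) T, Real.exp (σ * t) * g₁ t ≤ G₁)
    (hM₀0 : 0 ≤ M₀) (hF0 : 0 ≤ F) (hG₀0 : 0 ≤ G₀) (hG₁0 : 0 ≤ G₁) :
    ∀ t₀ ∈ Set.Ioo (0:ℝ) T, ∀ x ∈ Set.Icc (0:ℝ) 1,
      Real.exp (σ * t₀) * u x t₀ ≤ M₀ + F / (lam - σ) + G₁ / l + G₀ := by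
  obtain ⟨hσ0, hσlam⟩ := hσ
  intro t₀ ht₀ x hx
  obtain ⟨M, hMdef⟩ : ∃ M : ℝ, M = M₀ + F / (lam - σ) + G₁ / l + G₀ := ⟨_, rfl⟩
  rw [← hMdef]
  have hlamσ : 0 < lam - σ := by linarith
  have hFM : F ≤ (lam - σ) * M := by
    have h1 : F / (lam - σ) ≤ M := by
      have : 0 ≤ G₁ / l := div_nonneg hG₁0 hl.le
      rw [hMdef]; linarith
    calc F = (lam - σ) * (F / (lam - σ)) := by field_simp
    _ ≤ (lam - σ) * M := by nlinarith
  have hG₁M : G₁ / l ≤ M := by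
    have : 0 ≤ F / (lam - σ) := div_nonneg hF0 hlamσ.le
    rw [hMdef]; linarith
  have hG₀M : G₀ ≤ M := by
    have h1 : 0 ≤ F / (lam - σ) := div_nonneg hF0 hlamσ.le
    have h2 : 0 ≤ G₁ / l := div_nonneg hG₁0 hl.le
    rw [hMdef]; linarith
  have hM₀M : M₀ ≤ M := by
    have h1 : 0 ≤ F / (lam - σ) := div_nonneg hF0 hlamσ.le
    have h2 : 0 ≤ G₁ / l := div_nonneg hG₁0 hl.le
    rw [hMdef]; linarith
  -- continuity of u in x at fixed t, and of u on the whole rectangle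
  -- key: for every ε > 0, exp (σ*t₀) * u x t₀ ≤ M + ε * t₀
  have key : ∀ ε : ℝ, 0 < ε → Real.exp (σ * t₀) * u x t₀ ≤ M + ε * t₀ := by
    intro ε hε
    set w : ℝ × ℝ → ℝ := fun p => Real.exp (σ * p.2) * u p.1 p.2 - ε * p.2 with hwdef
    have hKsub : Set.Icc (0:ℝ) 1 ×ˢ Set.Icc (0:ℝ) t₀ ⊆ Set.Icc (0:ℝ) 1 ×ˢ Set.Icc (0:ℝ) T :=
      Set.prod_mono subset_rfl (Set.Icc_subset_Icc le_rfl ht₀.2.le)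
    have hKcomp : IsCompact (Set.Icc (0:ℝ) 1 ×ˢ Set.Icc (0:ℝ) t₀) :=
      (isCompact_Icc).prod isCompact_Icc
    have hKne : (Set.Icc (0:ℝ) 1 ×ˢ Set.Icc (0:ℝ) t₀).Nonempty :=
      ⟨(0, 0), by constructor <;> constructor <;> norm_num [ht₀.1.le]⟩
    have hwcont : ContinuousOn w (Set.Icc (0:ℝ) 1 ×ˢ Set.Icc (0:ℝ) t₀) := by
      apply ContinuousOn.sub
      · exact ((Real.continuous_exp.comp (continuous_const.mul continuous_snd)).continuousOn).mul
          (hsol.cont_u.mono hKsub)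
      · exact (continuous_const.mul continuous_snd).continuousOn
    obtain ⟨z, hzK, hzmax⟩ := hKcomp.exists_isMaxOn hKne hwcont
    obtain ⟨hzx, hzt⟩ := hzK
    -- the crucial claim
    have hwM : w z ≤ M := by
      by_contra hgt
      push_neg at hgt
      have hztT : z.2 ∈ Set.Icc (0:ℝ) T := ⟨hzt.1, hzt.2.trans ht₀.2.le⟩
      -- case t* = 0
      rcases eq_or_lt_of_le hzt.1 with h0 | hztpos
      · have : w z = u₀ z.1 := by
          simp only [hwdef, ← h0, mul_zero, Real.exp_zero, one_mul, sub_zero, hic z.1 hzx]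
        rw [this] at hgt
        exact absurd (le_trans (hM₀ z.1 hzx) hM₀M) (not_le.mpr hgt)
      have hztIoo : z.2 ∈ Set.Ioo (0:ℝ) T := ⟨hztpos, lt_of_le_of_lt hzt.2 ht₀.2⟩
      have hE : (0:ℝ) < Real.exp (σ * z.2) := Real.exp_pos _
      -- slice maxima
      have hmaxx : IsMaxOn (fun y => Real.exp (σ * z.2) * u y z.2 - ε * z.2)
          (Set.Icc (0:ℝ) 1) z.1 := by
        apply isMaxOn_iff.mpr
        intro y hy
        have := isMaxOn_iff.mp hzmax (y, z.2) ⟨hy, hzt⟩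
        simpa [hwdef] using this
      have hmaxt : IsMaxOn (fun s => Real.exp (σ * s) * u z.1 s - ε * s)
          (Set.Icc (0:ℝ) t₀) z.2 := by
        apply isMaxOn_iff.mpr
        intro s hs
        have := isMaxOn_iff.mp hzmax (z.1, s) ⟨hzx, hs⟩
        simpa [hwdef] using this
      -- case x* = 0
      rcases eq_or_lt_of_le hzx.1 with hx0 | hzxpos
      · have : w z = Real.exp (σ * z.2) * g₀ z.2 - ε * z.2 := by
          simp only [hwdef, ← hx0, hbc0 z.2 hztIoo]
        have hle : w z ≤ G₀ := by
          rw [this]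
          have := hG₀ z.2 hztT
          nlinarith
        exact absurd (hle.trans hG₀M) (not_le.mpr hgt)
      -- case x* = 1
      rcases eq_or_lt_of_le hzx.2 with hx1 | hzxlt1
      · -- Robin boundary: one-sided derivative at the max is ≥ 0
        have hder : HasDerivWithinAt (fun y => Real.exp (σ * z.2) * u y z.2 - ε * z.2)
            (Real.exp (σ * z.2) * ux 1 z.2) (Set.Icc 0 1) 1 :=
          ((hsol.deriv_x z.2 hztIoo 1 (by norm_num)).const_mul _).sub_const _
        have hmaxx' : IsMaxOn (fun y => Real.exp (σ * z.2) * u y z.2 - ε * z.2)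
            (Set.Icc (0:ℝ) 1) 1 := by rwa [hx1] at hmaxx
        have h0le : 0 ≤ Real.exp (σ * z.2) * ux 1 z.2 :=
          deriv_nonneg_of_max hmaxx' hder (by norm_num : (0:ℝ) < 1)
            (Set.Icc_subset_Icc le_rfl le_rfl)
        have hux1 : 0 ≤ ux 1 z.2 := by
          have h0le' : 0 ≤ ux 1 z.2 * Real.exp (σ * z.2) := by rwa [mul_comm] at h0le
          exact nonneg_of_mul_nonneg_left h0le' hE
        have hbcz := hbc1 z.2 hztIoo
        rw [hbcz] at hux1
        have hEug : Real.exp (σ * z.2) * u 1 z.2 ≤ G₁ / l := by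
          rw [le_div_iff₀ hl]
          have h2 := hG₁ z.2 hztT
          nlinarith
        have hwle : w z ≤ G₁ / l := by
          have : w z = Real.exp (σ * z.2) * u 1 z.2 - ε * z.2 := by
            simp only [hwdef, hx1]
          rw [this]
          nlinarith
        exact absurd (hwle.trans hG₁M) (not_le.mpr hgt)
      -- interior case
      have hzxIoo : z.1 ∈ Set.Ioo (0:ℝ) 1 := ⟨hzxpos, hzxlt1⟩
      -- time derivative at the max is ≥ 0
      have hutd : HasDerivAt (fun s => u z.1 s) (ut z.1 z.2) z.2 :=
        (hsol.deriv_t z.2 hztIoo z.1 hzxIoo).hasDerivAt (Ioo_mem_nhds hztIoo.1 hztIoo.2)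
      have hexp : HasDerivAt (fun s : ℝ => Real.exp (σ * s)) (Real.exp (σ * z.2) * σ) z.2 := by
        simpa using HasDerivAt.exp ((hasDerivAt_id z.2).const_mul σ)
      have hphit : HasDerivAt (fun s => Real.exp (σ * s) * u z.1 s - ε * s)
          (Real.exp (σ * z.2) * σ * u z.1 z.2 + Real.exp (σ * z.2) * ut z.1 z.2 - ε) z.2 := by
        have := (hexp.mul hutd).sub ((hasDerivAt_id z.2).const_mul ε)
        simp only [mul_one] at this
        exact this
      have hDt : 0 ≤ Real.exp (σ * z.2) * σ * u z.1 z.2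
          + Real.exp (σ * z.2) * ut z.1 z.2 - ε :=
        deriv_nonneg_of_max hmaxt hphit.hasDerivWithinAt hztpos
          (Set.Icc_subset_Icc le_rfl hzt.2)
      -- space derivative at the max is 0
      have hIccnhds : Set.Icc (0:ℝ) 1 ∈ nhds z.1 := Icc_mem_nhds hzxpos hzxlt1
      have hphix : HasDerivAt (fun y => Real.exp (σ * z.2) * u y z.2 - ε * z.2)
          (Real.exp (σ * z.2) * ux z.1 z.2) z.1 :=
        (((hsol.deriv_x z.2 hztIoo z.1 hzx).hasDerivAt hIccnhds).const_mul _).sub_const _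
      have hux0 : Real.exp (σ * z.2) * ux z.1 z.2 = 0 :=
        (hmaxx.isLocalMax hIccnhds).hasDerivAt_eq_zero hphix
      have huxz : ux z.1 z.2 = 0 := by
        rcases mul_eq_zero.mp hux0 with h | h
        · exact absurd h (ne_of_gt hE)
        · exact h
      -- second space derivative at the max is ≤ 0
      have huxx : uxx z.1 z.2 ≤ 0 := by
        by_contra hpos
        push_neg at hpos
        have h2 := hsol.deriv_xx z.2 hztIoo z.1 hzxIoo
        rw [hasDerivWithinAt_iff_tendsto_slope] at h2
        have hsub : Set.Ioo z.1 1 ⊆ Set.Ioo (0:ℝ) 1 \ {z.1} := fun y hy =>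
          ⟨⟨lt_trans hzxpos hy.1, hy.2⟩, hy.1.ne'⟩
        have h3 : Filter.Tendsto (slope (fun y => ux y z.2) z.1)
            (nhdsWithin z.1 (Set.Ioo z.1 1)) (nhds (uxx z.1 z.2)) :=
          h2.mono_left (nhdsWithin_mono _ hsub)
        have hev : ∀ᶠ y in nhdsWithin z.1 (Set.Ioo z.1 1),
            0 < slope (fun y => ux y z.2) z.1 y :=
          h3.eventually (lt_mem_nhds hpos)
        rw [eventually_nhdsWithin_iff, Metric.eventually_nhds_iff] at hev
        obtain ⟨δ, hδ, hball⟩ := hev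
        set b := min (z.1 + δ/2) ((z.1 + 1)/2) with hbdef
        have hzb : z.1 < b := lt_min (by linarith) (by linarith [hzxlt1])
        have hb1 : b < 1 := lt_of_le_of_lt (min_le_right _ _) (by linarith [hzxlt1])
        have hposux : ∀ y ∈ Set.Ioo z.1 b, 0 < ux y z.2 := by
          intro y hy
          have hyI : y ∈ Set.Ioo z.1 1 := ⟨hy.1, lt_trans hy.2 hb1⟩
          have hdist : dist y z.1 < δ := by
            rw [Real.dist_eq, abs_of_pos (sub_pos.mpr hy.1)]
            have : y < z.1 + δ/2 := lt_of_lt_of_le hy.2 (min_le_left _ _)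
            linarith
          have hs := hball hdist hyI
          have hslope : slope (fun w => ux w z.2) z.1 y = ux y z.2 / (y - z.1) := by
            rw [slope_def_field, huxz, sub_zero]
          rw [hslope] at hs
          have hy1 : 0 < y - z.1 := sub_pos.mpr hy.1
          exact (div_pos_iff.mp hs).resolve_right (fun h => absurd hy1 (not_lt.mpr h.2.le)) |>.1
        have hcontu : ContinuousOn (fun y => u y z.2) (Set.Icc (0:ℝ) 1) :=
          fun y hy => (hsol.deriv_x z.2 hztIoo y hy).continuousWithinAt
        have hmono : StrictMonoOn (fun y => u y z.2) (Set.Icc z.1 b) := by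
          apply strictMonoOn_of_deriv_pos (convex_Icc _ _)
          · exact hcontu.mono (Set.Icc_subset_Icc hzxpos.le hb1.le)
          · intro y hy
            rw [interior_Icc] at hy
            have hyI : y ∈ Set.Ioo (0:ℝ) 1 := ⟨lt_trans hzxpos hy.1, lt_trans hy.2 hb1⟩
            have hd : HasDerivAt (fun y => u y z.2) (ux y z.2) y :=
              (hsol.deriv_x z.2 hztIoo y ⟨hyI.1.le, hyI.2.le⟩).hasDerivAt
                (Icc_mem_nhds hyI.1 hyI.2)
            rw [hd.deriv]
            exact hposux y hy
        have hub : u z.1 z.2 < u b z.2 :=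
          hmono ⟨le_rfl, hzb.le⟩ ⟨hzb.le, le_rfl⟩ hzb
        have hbK : (b, z.2) ∈ Set.Icc (0:ℝ) 1 ×ˢ Set.Icc (0:ℝ) t₀ :=
          ⟨⟨le_trans hzx.1 hzb.le, hb1.le⟩, hzt⟩
        have hle := isMaxOn_iff.mp hzmax (b, z.2) hbK
        simp only [hwdef] at hle
        nlinarith
      -- combine with the PDE
      have hpde := hsol.pde z.2 hztIoo z.1 hzxIoo
      rw [hpde] at hDt
      have hfb := hF z.1 hzx z.2 hztT
      have hgt' : M < Real.exp (σ * z.2) * u z.1 z.2 - ε * z.2 := by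
        simpa [hwdef] using hgt
      have hεz : 0 ≤ ε * z.2 := mul_nonneg hε.le hzt.1
      have h1 : Real.exp (σ * z.2) * uxx z.1 z.2 ≤ 0 :=
        mul_nonpos_of_nonneg_of_nonpos hE.le huxx
      have h2 : (lam - σ) * M ≤ (lam - σ) * (Real.exp (σ * z.2) * u z.1 z.2) := by
        apply mul_le_mul_of_nonneg_left _ hlamσ.le
        linarith
      have h3 : a * (Real.exp (σ * z.2) * uxx z.1 z.2) ≤ 0 :=
        mul_nonpos_of_nonneg_of_nonpos ha.le h1
      have hDt2 : 0 ≤ σ * (Real.exp (σ * z.2) * u z.1 z.2)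
          + a * (Real.exp (σ * z.2) * uxx z.1 z.2)
          - lam * (Real.exp (σ * z.2) * u z.1 z.2)
          + Real.exp (σ * z.2) * f z.1 z.2 - ε := by
        ring_nf at hDt ⊢
        linarith
      linarith [hDt2, h2, h3, hfb, hFM, hε]
    -- conclude from w (x, t₀) ≤ w z ≤ M
    have hmem : (x, t₀) ∈ Set.Icc (0:ℝ) 1 ×ˢ Set.Icc (0:ℝ) t₀ :=
      ⟨hx, ⟨ht₀.1.le, le_rfl⟩⟩
    have hle2 := (isMaxOn_iff.mp hzmax) (x, t₀) hmem
    simp only [hwdef] at hle2 hwM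
    linarith
  refine le_of_forall_pos_le_add fun δ hδ => ?_
  have ht₀pos := ht₀.1
  have hkey := key (δ / t₀) (div_pos hδ ht₀pos)
  rwa [div_mul_cancel₀ _ (ne_of_gt ht₀pos)] at hkey

/-- Weighted max-norm estimate obtained by the generalized Lyapunov method for a single
parabolic equation with Dirichlet disturbance `g₀` and Robin disturbance `g₁`. -/
theorem stmt11
    (a lam l σ T : ℝ) (ha : 0 < a) (hlam : 0 < lam) (hl : 0 < l)
    (hσ : σ ∈ Set.Ioo 0 lam) (hT : 0 < T)
    (f u ux uxx ut : ℝ → ℝ → ℝ) (g₀ g₁ u₀ : ℝ → ℝ)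
    (hf : ContinuousOn (fun p : ℝ × ℝ => f p.1 p.2) (Set.Icc 0 1 ×ˢ Set.Icc 0 T))
    (hg₀ : ContinuousOn g₀ (Set.Icc 0 T)) (hg₁ : ContinuousOn g₁ (Set.Icc 0 T))
    (hu₀ : ContinuousOn u₀ (Set.Icc 0 1))
    (hsol : IsParabolicSolOn T a lam f u ux uxx ut)
    (hbc0 : ∀ t ∈ Set.Ioo (0:ℝ) T, u 0 t = g₀ t)
    (hbc1 : ∀ t ∈ Set.Ioo (0:ℝ) T, ux 1 t = -l * u 1 t + g₁ t)
    (hic : ∀ x ∈ Set.Icc (0:ℝ) 1, u x 0 = u₀ x) :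
    ∀ t ∈ Set.Ioo (0:ℝ) T,
      supIcc01 (fun x => Real.exp (σ * t) * u x t) ≤
        supIcc01 u₀ +
        (1 / (lam - σ)) *
          sSup ((fun p : ℝ × ℝ => |Real.exp (σ * p.2) * f p.1 p.2|) ''
            (Set.Icc 0 1 ×ˢ Set.Icc 0 T)) +
        (1 / l) * sSup ((fun s => |Real.exp (σ * s) * g₁ s|) '' Set.Icc 0 T) +
        sSup ((fun s => |Real.exp (σ * s) * g₀ s|) '' Set.Icc 0 T) := by
  intro t₀ ht₀
  obtain ⟨hσ0, hσlam⟩ := hσ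
  have hlamσ : 0 < lam - σ := by linarith
  set M₀ : ℝ := supIcc01 u₀ with hM₀def
  set F : ℝ := sSup ((fun p : ℝ × ℝ => |Real.exp (σ * p.2) * f p.1 p.2|) ''
      (Set.Icc 0 1 ×ˢ Set.Icc 0 T)) with hFdef
  set G₁ : ℝ := sSup ((fun s => |Real.exp (σ * s) * g₁ s|) '' Set.Icc 0 T) with hG₁def
  set G₀ : ℝ := sSup ((fun s => |Real.exp (σ * s) * g₀ s|) '' Set.Icc 0 T) with hG₀def
  -- bounded above facts
  have B₀ : BddAbove ((fun x => |u₀ x|) '' Set.Icc 0 1) :=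
    (isCompact_Icc.image_of_continuousOn hu₀.abs).bddAbove
  have BF : BddAbove ((fun p : ℝ × ℝ => |Real.exp (σ * p.2) * f p.1 p.2|) ''
      (Set.Icc 0 1 ×ˢ Set.Icc 0 T)) := by
    apply ((isCompact_Icc.prod isCompact_Icc).image_of_continuousOn _).bddAbove
    exact (((Real.continuous_exp.comp (continuous_const.mul continuous_snd)).continuousOn).mul
      hf).abs
  have BG₁ : BddAbove ((fun s => |Real.exp (σ * s) * g₁ s|) '' Set.Icc 0 T) := by
    apply (isCompact_Icc.image_of_continuousOn _).bddAbove
    exact (((Real.continuous_exp.comp (continuous_const.mul continuous_id)).continuousOn).mul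
      hg₁).abs
  have BG₀ : BddAbove ((fun s => |Real.exp (σ * s) * g₀ s|) '' Set.Icc 0 T) := by
    apply (isCompact_Icc.image_of_continuousOn _).bddAbove
    exact (((Real.continuous_exp.comp (continuous_const.mul continuous_id)).continuousOn).mul
      hg₀).abs
  -- bound facts
  have hM₀abs : ∀ x ∈ Set.Icc (0:ℝ) 1, |u₀ x| ≤ M₀ := fun x hx =>
    le_csSup B₀ ⟨x, hx, rfl⟩
  have hFabs : ∀ x ∈ Set.Icc (0:ℝ) 1, ∀ t ∈ Set.Icc (0:ℝ) T,
      |Real.exp (σ * t) * f x t| ≤ F := fun x hx t ht =>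
    le_csSup BF ⟨(x, t), ⟨hx, ht⟩, rfl⟩
  have hG₁abs : ∀ t ∈ Set.Icc (0:ℝ) T, |Real.exp (σ * t) * g₁ t| ≤ G₁ := fun t ht =>
    le_csSup BG₁ ⟨t, ht, rfl⟩
  have hG₀abs : ∀ t ∈ Set.Icc (0:ℝ) T, |Real.exp (σ * t) * g₀ t| ≤ G₀ := fun t ht =>
    le_csSup BG₀ ⟨t, ht, rfl⟩
  have hM₀0 : 0 ≤ M₀ := le_trans (abs_nonneg _) (hM₀abs 0 ⟨le_rfl, zero_le_one⟩)
  have hF0 : 0 ≤ F := le_trans (abs_nonneg _)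
    (hFabs 0 ⟨le_rfl, zero_le_one⟩ 0 ⟨le_rfl, hT.le⟩)
  have hG₁0 : 0 ≤ G₁ := le_trans (abs_nonneg _) (hG₁abs 0 ⟨le_rfl, hT.le⟩)
  have hG₀0 : 0 ≤ G₀ := le_trans (abs_nonneg _) (hG₀abs 0 ⟨le_rfl, hT.le⟩)
  -- the negated solution
  have hsolneg : IsParabolicSolOn T a lam (fun x t => -f x t) (fun x t => -u x t)
      (fun x t => -ux x t) (fun x t => -uxx x t) (fun x t => -ut x t) :=
    ⟨hsol.cont_u.neg, hsol.cont_ux.neg, hsol.cont_ut.neg, hsol.cont_uxx.neg,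
     fun t ht x hx => (hsol.deriv_x t ht x hx).neg,
     fun t ht x hx => (hsol.deriv_xx t ht x hx).neg,
     fun t ht x hx => (hsol.deriv_t t ht x hx).neg,
     fun t ht x hx => by rw [hsol.pde t ht x hx]; ring⟩
  -- two one-sided estimates
  have hpos := oneSided a lam l σ T ha hl ⟨hσ0, hσlam⟩ hT f u ux uxx ut g₀ g₁ u₀
    hsol hbc0 hbc1 hic M₀ F G₀ G₁
    (fun x hx => le_trans (le_abs_self _) (hM₀abs x hx))
    (fun x hx t ht => le_trans (le_abs_self _) (hFabs x hx t ht))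
    (fun t ht => le_trans (le_abs_self _) (hG₀abs t ht))
    (fun t ht => le_trans (le_abs_self _) (hG₁abs t ht))
    hM₀0 hF0 hG₀0 hG₁0 t₀ ht₀
  have hneg := oneSided a lam l σ T ha hl ⟨hσ0, hσlam⟩ hT
    (fun x t => -f x t) (fun x t => -u x t) (fun x t => -ux x t) (fun x t => -uxx x t)
    (fun x t => -ut x t) (fun t => -g₀ t) (fun t => -g₁ t) (fun x => -u₀ x)
    hsolneg
    (fun t ht => by simp only [hbc0 t ht])
    (fun t ht => by simp only [hbc1 t ht]; ring)
    (fun x hx => by simp only [hic x hx])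
    M₀ F G₀ G₁
    (fun x hx => le_trans (neg_le_abs _) (hM₀abs x hx))
    (fun x hx t ht => by
      have := le_trans (neg_le_abs _) (hFabs x hx t ht)
      simpa [mul_neg] using this)
    (fun t ht => by
      have := le_trans (neg_le_abs _) (hG₀abs t ht)
      simpa [mul_neg] using this)
    (fun t ht => by
      have := le_trans (neg_le_abs _) (hG₁abs t ht)
      simpa [mul_neg] using this)
    hM₀0 hF0 hG₀0 hG₁0 t₀ ht₀
  -- conclude
  have hRHS : M₀ + F / (lam - σ) + G₁ / l + G₀
      = M₀ + (1 / (lam - σ)) * F + (1 / l) * G₁ + G₀ := by ring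
  have hRHS0 : 0 ≤ M₀ + (1 / (lam - σ)) * F + (1 / l) * G₁ + G₀ := by
    have h1 : 0 ≤ (1 / (lam - σ)) * F :=
      mul_nonneg (by positivity) hF0
    have h2 : 0 ≤ (1 / l) * G₁ := mul_nonneg (by positivity) hG₁0
    linarith
  apply Real.sSup_le _ hRHS0
  rintro v ⟨y, hy, rfl⟩
  rw [← hRHS]
  apply abs_le.mpr
  constructor
  · have := hneg y hy
    simp only [mul_neg] at this
    linarith
  · exact hpos y hy
end

section
/- Let N ≥ 2 be an integer, l > 0, and k₁,…,k_N ∈ (0,l), with indices understood cyclically modulo N (index 0 means N, index −1 means N−1, etc.). Set 𝒩 := (Π_{i=1}^N k_i)/l^N and, for each i ∈ {1,…,N}, 𝓜_i := 1 + Σ_{m=1}^{i} (Π_{r=0}^{m−1} k_{i−r})/l^m + Σ_{m=i+1}^{N−1} (Π_{r=0}^{i−1} k_{i−r})(Π_{s=0}^{m−i−1} k_{N−s})/l^m. Suppose a₁,…,a_N ≥ 0 and c ≥ 0 satisfy a_i ≤ c + (k_i/l) a_{i−1} for every i (with a₀ := a_N). Then 𝒩 < 1 and for every i, a_i ≤ 𝓜_i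 c + 𝒩 a_i, and consequently a_i ≤ 𝓒_i c where 𝓒_i := 𝓜_i/(1−𝒩). -/
/-- `𝒩 := (∏_{i=1}^N k_i)/l^N`. -/
noncomputable def calN (N : ℕ) (l : ℝ) (k : ℤ → ℝ) : ℝ :=
  (∏ i ∈ Finset.Icc (1:ℤ) (N:ℤ), k i) / l ^ N

/-- `𝓜_i := 1 + Σ_{m=1}^{i} (Π_{r=0}^{m−1} k_{i−r})/l^m
  + Σ_{m=i+1}^{N−1} (Π_{r=0}^{i−1} k_{i−r})(Π_{s=0}^{m−i−1} k_{N−s})/l^m`. -/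
noncomputable def calM (N : ℕ) (l : ℝ) (k : ℤ → ℝ) (i : ℤ) : ℝ :=
  1 + (∑ m ∈ Finset.Icc (1:ℤ) i, (∏ r ∈ Finset.Icc (0:ℤ) (m - 1), k (i - r)) / l ^ m)
    + (∑ m ∈ Finset.Icc (i + 1) ((N:ℤ) - 1),
        ((∏ r ∈ Finset.Icc (0:ℤ) (i - 1), k (i - r)) *
          (∏ s ∈ Finset.Icc (0:ℤ) (m - i - 1), k ((N:ℤ) - s))) / l ^ m)

/-!
Unfolding `a_i ≤ c + (k_i/l) a_{i-1}` along `n` edges of the cycle gives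
`a_i ≤ (∑_{m<n} w_m) c + w_n a_{i-n}` with `w_m = (∏_{r<m} k_{i-r}) / l^m`.
After one full turn, `n = N`, periodicity turns `w_N` into `𝒩` and `a_{i-N}` into `a_i`;
the products in `𝓜_i` that pass index `0` are the wrapped-around `w_m`, so `∑_{m<N} w_m ≤ 𝓜_i`.
Since every `k_j < l`, `𝒩 < 1`, and the last bound follows by dividing by `1 - 𝒩`.
-/

open Finset Function

theorem Function.Periodic.prod_Ico_add_eq {M : Type*} [CommMonoid M] {f : ℤ → M} {c : ℤ}
    (hf : Periodic f c) (hc : 0 < c) (i : ℤ) :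
    ∏ j ∈ Ico i (i + c), f j = ∏ j ∈ Ico 0 c, f j := by
  have shift : ∀ i : ℤ, ∏ j ∈ Ico (i + 1) (i + 1 + c), f j = ∏ j ∈ Ico i (i + c), f j := by
    intro i
    rw [← insert_Ico_add_one_left_eq_Ico (by omega : i < i + c), prod_insert (by simp),
      add_right_comm, ← insert_Ico_right_eq_Ico_add_one (by omega : i + 1 ≤ i + c),
      prod_insert (by simp), hf, mul_comm]
  induction i using Int.induction_on with
  | zero => rw [zero_add]
  | succ i ih => rw [shift, ih]
  | pred i ih => rw [← ih, ← shift, sub_add_cancel]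

noncomputable def pathGain (l : ℝ) (k : ℤ → ℝ) (i m : ℤ) : ℝ :=
  (∏ r ∈ Ico 0 m, k (i - r)) / l ^ m

section pathGain

variable {l : ℝ} {k : ℤ → ℝ}

theorem pathGain_zero (i : ℤ) : pathGain l k i 0 = 1 := by
  simp [pathGain]

theorem pathGain_add_one (hl : l ≠ 0) (i : ℤ) {m : ℤ} (hm : 0 ≤ m) :
    pathGain l k i (m + 1) = pathGain l k i m * (k (i - m) / l) := by
  rw [pathGain, pathGain, ← insert_Ico_right_eq_Ico_add_one hm, prod_insert right_notMem_Ico,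
    zpow_add_one₀ hl]
  ring

theorem pathGain_nonneg (hl : 0 < l) (hk : ∀ j, 0 ≤ k j) (i m : ℤ) : 0 ≤ pathGain l k i m :=
  div_nonneg (prod_nonneg fun _ _ => hk _) (zpow_nonneg hl.le m)

theorem pathGain_natCast_of_periodic {N : ℕ} (hN : 0 < N) (hk : Periodic k N) (i : ℤ) :
    pathGain l k i N = calN N l k := by
  have reflect : ∏ r ∈ Ico 0 (N : ℤ), k (i - r) = ∏ j ∈ Ico (i + 1 - N) (i + 1 - N + N), k j :=
    prod_nbij' (fun r => i - r) (fun j => i - j) (by intro r hr; simp only [mem_Ico] at *; omega)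
      (by intro j hj; simp only [mem_Ico] at *; omega) (fun _ _ => by ring)
      (fun _ _ => by ring) fun _ _ => rfl
  have hN' : (0 : ℤ) < N := by exact_mod_cast hN
  rw [pathGain, calN, reflect, hk.prod_Ico_add_eq hN', ← hk.prod_Ico_add_eq hN' 1,
    add_comm 1, Ico_add_one_right_eq_Icc, zpow_natCast]

theorem le_sum_pathGain_mul_add (hl : 0 < l) (hk : ∀ j, 0 ≤ k j) {a : ℤ → ℝ} {c : ℝ}
    (hrec : ∀ j, a j ≤ c + k j / l * a (j - 1)) (i : ℤ) {n : ℤ} (hn : 0 ≤ n) :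
    a i ≤ (∑ m ∈ Ico 0 n, pathGain l k i m) * c + pathGain l k i n * a (i - n) := by
  induction n, hn using Int.leInduction with
  | base => simp [pathGain_zero]
  | succ n hn ih =>
    have hstep : a (i - n) ≤ c + k (i - n) / l * a (i - (n + 1)) := by
      simpa only [sub_sub] using hrec (i - n)
    calc a i ≤ (∑ m ∈ Ico 0 n, pathGain l k i m) * c + pathGain l k i n * a (i - n) := ih
      _ ≤ (∑ m ∈ Ico 0 n, pathGain l k i m) * c
            + pathGain l k i n * (c + k (i - n) / l * a (i - (n + 1))) := by
          gcongr
          exact pathGain_nonneg hl hk i n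
      _ = (∑ m ∈ Ico 0 (n + 1), pathGain l k i m) * c
            + pathGain l k i (n + 1) * a (i - (n + 1)) := by
          rw [← insert_Ico_right_eq_Ico_add_one hn, sum_insert right_notMem_Ico,
            pathGain_add_one hl.ne' i hn]
          ring

theorem prod_Icc_mul_prod_Icc_of_periodic {N : ℕ} (hk : Periodic k N) {i m : ℤ} (hi : 0 ≤ i)
    (him : i ≤ m) :
    (∏ r ∈ Icc 0 (i - 1), k (i - r)) * ∏ s ∈ Icc 0 (m - i - 1), k (N - s)
      = ∏ r ∈ Ico 0 m, k (i - r) := by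
  have tail : ∏ s ∈ Ico 0 (m - i), k (N - s) = ∏ r ∈ Ico i m, k (i - r) := by
    have shift := prod_Ico_add' (fun r => k (i - r)) 0 (m - i) i
    rw [zero_add, sub_add_cancel] at shift
    rw [← shift]
    refine prod_congr rfl fun s _ => ?_
    rw [show i - (s + i) = -s by ring, ← hk (-s), neg_add_eq_sub]
  rw [Icc_sub_one_right_eq_Ico, Icc_sub_one_right_eq_Ico, tail, ← prod_union
    (Ico_disjoint_Ico_consecutive 0 i m), Ico_union_Ico_eq_Ico hi him]

theorem calM_eq_sum_pathGain {N : ℕ} (hk : Periodic k N) {i : ℤ} (hi : 0 ≤ i) :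
    calM N l k i = ∑ m ∈ Icc 0 i, pathGain l k i m + ∑ m ∈ Icc (i + 1) (N - 1), pathGain l k i m := by
  rw [calM, ← insert_Icc_add_one_left_eq_Icc hi, sum_insert (by simp), pathGain_zero, zero_add]
  congr 1
  · refine congrArg _ (sum_congr rfl fun m _ => ?_)
    rw [Icc_sub_one_right_eq_Ico, pathGain]
  · refine sum_congr rfl fun m hm => ?_
    rw [prod_Icc_mul_prod_Icc_of_periodic hk hi (by simp only [mem_Icc] at hm; omega), pathGain]

theorem sum_pathGain_le_calM (hl : 0 < l) (hk₀ : ∀ j, 0 ≤ k j) {N : ℕ} (hk : Periodic k N)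
    {i : ℤ} (hi : 0 ≤ i) :
    ∑ m ∈ Ico 0 (N : ℤ), pathGain l k i m ≤ calM N l k i := by
  rw [calM_eq_sum_pathGain hk hi, ← sum_union (disjoint_left.2 fun m h h' => by
    simp only [mem_Icc] at h h'; omega)]
  exact sum_le_sum_of_subset_of_nonneg
    (fun m hm => by simp only [mem_Ico, mem_union, mem_Icc] at *; omega) fun m _ _ => pathGain_nonneg hl hk₀ i m

end pathGain

theorem calN_lt_one {N : ℕ} (hN : 0 < N) {l : ℝ} (hl : 0 < l) {k : ℤ → ℝ}
    (hk : ∀ j ∈ Icc (1 : ℤ) N, k j ∈ Set.Ioo 0 l) : calN N l k < 1 := by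
  rw [calN, div_lt_one (pow_pos hl N)]
  calc ∏ j ∈ Icc (1 : ℤ) N, k j < ∏ _j ∈ Icc (1 : ℤ) N, l :=
        prod_lt_prod_of_nonempty (fun j hj => (hk j hj).1) (fun j hj => (hk j hj).2)
          (nonempty_Icc.2 (by omega))
    _ = l ^ N := by rw [prod_const, Int.card_Icc, add_sub_cancel_right, Int.toNat_natCast]

theorem stmt12_general (N : ℕ) (hN : 2 ≤ N) (l : ℝ) (hl : 0 < l) (k : ℤ → ℝ)
    (hk_per : ∀ i : ℤ, k (i + N) = k i) (hk : ∀ i : ℤ, k i ∈ Set.Ioo 0 l)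
    (a : ℤ → ℝ) (ha_per : ∀ i : ℤ, a (i + N) = a i)
    (c : ℝ) (hc : 0 ≤ c) (hrec : ∀ i : ℤ, a i ≤ c + (k i / l) * a (i - 1)) :
    calN N l k < 1 ∧
      ∀ i ∈ Finset.Icc (1:ℤ) (N:ℤ),
        a i ≤ calM N l k i * c + calN N l k * a i ∧
        a i ≤ (calM N l k i / (1 - calN N l k)) * c := by
  have hk₀ : ∀ j, 0 ≤ k j := fun j => (hk j).1.le
  have hN_lt_one : calN N l k < 1 := calN_lt_one (by omega) hl fun j _ => hk j
  refine ⟨hN_lt_one, fun i hi => ?_⟩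
  have hi₀ : 0 ≤ i := by simp only [mem_Icc] at hi; omega
  have around := le_sum_pathGain_mul_add hl hk₀ hrec i (Int.natCast_nonneg N)
  rw [pathGain_natCast_of_periodic (by omega) hk_per, Periodic.sub_eq ha_per] at around
  have hM : a i ≤ calM N l k i * c + calN N l k * a i :=
    around.trans (by gcongr; exact sum_pathGain_le_calM hl hk₀ hk_per hi₀)
  refine ⟨hM, ?_⟩
  rw [div_mul_eq_mul_div, le_div_iff₀ (sub_pos.2 hN_lt_one)]
  linarith

/-- The cyclic recursion lemma: if `a_i ≤ c + (k_i/l) a_{i−1}` around the directed cycle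
of `N` agents (indices cyclic modulo `N`), then `𝒩 < 1`, `a_i ≤ 𝓜_i c + 𝒩 a_i`, and
`a_i ≤ 𝓒_i c` with `𝓒_i = 𝓜_i/(1−𝒩)`. -/
theorem stmt12 (N : ℕ) (hN : 2 ≤ N) (l : ℝ) (hl : 0 < l) (k : ℤ → ℝ)
    (hk_per : ∀ i : ℤ, k (i + N) = k i) (hk : ∀ i : ℤ, k i ∈ Set.Ioo 0 l)
    (a : ℤ → ℝ) (ha_per : ∀ i : ℤ, a (i + N) = a i) (ha : ∀ i : ℤ, 0 ≤ a i)
    (c : ℝ) (hc : 0 ≤ c) (hrec : ∀ i : ℤ, a i ≤ c + (k i / l) * a (i - 1)) :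
    calN N l k < 1 ∧
      ∀ i ∈ Finset.Icc (1:ℤ) (N:ℤ),
        a i ≤ calM N l k i * c + calN N l k * a i ∧
        a i ≤ (calM N l k i / (1 - calN N l k)) * c :=
  stmt12_general N hN l hl k hk_per hk a ha_per c hc hrec
end

section
/- Let α>0, λ>0, l>0, σ ∈ (0,λ), let f be continuous on [0,1]×[0,∞) and q continuous on [0,∞). Let w be a classical solution on [0,1]×[0,∞) of w_t = α w_xx − λ w + f with w(0,t) = q(t), w_x(1,t) = −l w(1,t), and initial datum w₀ ∈ C([0,1]); let q̃ be a classical solution of q̃_t = α q̃_xx − λ q̃ + f with q̃_x(0,t)=0, q̃_x(1,t) = −l q̃(1,t), and initial datum q̃₀ ∈ C([0,1]). Set q̂ := w − q̃. Then for every t>0, ‖e^{σt} q̂(·,t)‖_{C([0,1])} ≤ ‖w₀‖_{C([0,1])} + ‖q̃₀‖_{C([0,1])} + (2/(λ−σ)) max_{(x,s)∈[0,1]×[0,t]} |e^{σs} f(x,s)| + max_{s∈[0,t]} |e^{σs} q(s)|. -/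
open Topology Filter Set

private lemma expLin (c d y : ℝ) :
    HasDerivAt (fun z : ℝ => Real.exp (c * z + d)) (c * Real.exp (c * y + d)) y := by
  have h1 : HasDerivAt (fun z : ℝ => c * z + d) c y := by
    simpa using ((hasDerivAt_id y).const_mul c).add_const d
  simpa [Function.comp_def, mul_comm] using (Real.hasDerivAt_exp (c * y + d)).comp y h1

private lemma derivLeft {f : ℝ → ℝ} {d a b : ℝ} (hab : a < b)
    (hmax : ∀ y ∈ Set.Icc a b, f y ≤ f a)
    (hd : HasDerivWithinAt f d (Set.Icc a b) a) : d ≤ 0 := by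
  have h1 : HasDerivWithinAt f d (Set.Ioc a b) a := hd.mono Set.Ioc_subset_Icc_self
  rw [hasDerivWithinAt_iff_tendsto_slope] at h1
  have hdiff : Set.Ioc a b \ {a} = Set.Ioc a b :=
    Set.diff_singleton_eq_self (fun h => absurd h.1 (lt_irrefl _))
  rw [hdiff] at h1
  haveI : (𝓝[Set.Ioc a b] a).NeBot := by
    rw [nhdsWithin_Ioc_eq_nhdsGT hab]
    infer_instance
  refine le_of_tendsto h1 ?_
  filter_upwards [self_mem_nhdsWithin] with y hy
  rw [slope_def_field]
  apply div_nonpos_of_nonpos_of_nonneg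
  · exact sub_nonpos.mpr (hmax y ⟨hy.1.le, hy.2⟩)
  · exact sub_nonneg.mpr hy.1.le

private lemma derivRight {f : ℝ → ℝ} {d a b : ℝ} (hab : a < b)
    (hmax : ∀ y ∈ Set.Icc a b, f y ≤ f b)
    (hd : HasDerivWithinAt f d (Set.Icc a b) b) : 0 ≤ d := by
  have h1 : HasDerivWithinAt f d (Set.Ico a b) b := hd.mono Set.Ico_subset_Icc_self
  rw [hasDerivWithinAt_iff_tendsto_slope] at h1
  have hdiff : Set.Ico a b \ {b} = Set.Ico a b :=
    Set.diff_singleton_eq_self (fun h => absurd h.2 (lt_irrefl _))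
  rw [hdiff] at h1
  haveI : (𝓝[Set.Ico a b] b).NeBot := by
    rw [nhdsWithin_Ico_eq_nhdsLT hab]
    infer_instance
  refine ge_of_tendsto h1 ?_
  filter_upwards [self_mem_nhdsWithin] with y hy
  rw [slope_def_field]
  exact div_nonneg_of_nonpos (sub_nonpos.mpr (hmax y ⟨hy.1, hy.2.le⟩)) (sub_nonpos.mpr hy.2.le)

private lemma secDeriv {f f' : ℝ → ℝ} {x0 d : ℝ} (hx0 : x0 ∈ Set.Ioo (0:ℝ) 1)
    (hmax : ∀ y ∈ Set.Icc (0:ℝ) 1, f y ≤ f x0)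
    (hf : ∀ y ∈ Set.Icc (0:ℝ) 1, HasDerivWithinAt f (f' y) (Set.Icc 0 1) y)
    (hd : HasDerivAt f' d x0) : d ≤ 0 := by
  by_contra hcon
  push_neg at hcon
  have hmem : Set.Icc (0:ℝ) 1 ∈ 𝓝 x0 := Icc_mem_nhds hx0.1 hx0.2
  have hatx0 : HasDerivAt f (f' x0) x0 :=
    (hf x0 (Set.Ioo_subset_Icc_self hx0)).hasDerivAt hmem
  have h0 : f' x0 = 0 := by
    have hloc : IsLocalMax f x0 := Filter.eventually_of_mem hmem hmax
    exact hloc.hasDerivAt_eq_zero hatx0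
  have hslope := hasDerivAt_iff_tendsto_slope.mp hd
  have hev : ∀ᶠ y in 𝓝[>] x0, 0 < slope f' x0 y := by
    have h2 : ∀ᶠ y in 𝓝[≠] x0, 0 < slope f' x0 y := hslope.eventually (eventually_gt_nhds hcon)
    exact h2.filter_mono (nhdsWithin_mono _ (fun y hy => ne_of_gt hy))
  obtain ⟨u, hu, hIoo⟩ := mem_nhdsGT_iff_exists_Ioo_subset.mp hev
  set c := min u 1 with hc
  have hx0c : x0 < c := lt_min hu hx0.2
  have hc1 : c ≤ 1 := min_le_right _ _
  have hcont : ContinuousOn f (Set.Icc x0 c) := by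
    intro y hy
    have hy' : y ∈ Set.Icc (0:ℝ) 1 := ⟨le_trans hx0.1.le hy.1, le_trans hy.2 hc1⟩
    exact ((hf y hy').continuousWithinAt).mono (Set.Icc_subset_Icc hx0.1.le hc1)
  have hder : ∀ z ∈ Set.Ioo x0 c, HasDerivAt f (f' z) z := by
    intro z hz
    have hz' : z ∈ Set.Ioo (0:ℝ) 1 := ⟨lt_trans hx0.1 hz.1, lt_of_lt_of_le hz.2 hc1⟩
    exact (hf z (Set.Ioo_subset_Icc_self hz')).hasDerivAt (Icc_mem_nhds hz'.1 hz'.2)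
  obtain ⟨ξ, hξ, hξeq⟩ := exists_hasDerivAt_eq_slope f f' hx0c hcont hder
  have hξpos : 0 < f' ξ := by
    have hs : 0 < slope f' x0 ξ := hIoo ⟨hξ.1, lt_of_lt_of_le hξ.2 (min_le_left _ _)⟩
    rw [slope_def_field, h0, sub_zero] at hs
    have hden : 0 < ξ - x0 := sub_pos.mpr hξ.1
    have := (div_pos_iff).mp hs
    rcases this with ⟨h, _⟩ | ⟨_, h2⟩
    · exact h
    · linarith
  have hcmem : c ∈ Set.Icc (0:ℝ) 1 := ⟨le_trans hx0.1.le hx0c.le, hc1⟩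
  have hnum : f c - f x0 ≤ 0 := sub_nonpos.mpr (hmax c hcmem)
  have : f' ξ ≤ 0 := by
    rw [hξeq]
    apply div_nonpos_of_nonpos_of_nonneg hnum (sub_nonneg.mpr hx0c.le)
  linarith

private lemma maxprin (A β l F T K : ℝ) (hA : 0 < A) (hβ : 0 < β) (hl : 0 < l)
    (hT : 0 < T) (hFK : F / β ≤ K) (hK0 : 0 ≤ K)
    (v vx vxx vt : ℝ → ℝ → ℝ)
    (hc : ContinuousOn (fun p : ℝ × ℝ => v p.1 p.2) (Set.Icc 0 1 ×ˢ Set.Icc 0 T))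
    (hdx : ∀ t ∈ Set.Ioc (0:ℝ) T, ∀ x ∈ Set.Icc (0:ℝ) 1,
        HasDerivWithinAt (fun y => v y t) (vx x t) (Set.Icc 0 1) x)
    (hdxx : ∀ t ∈ Set.Ioc (0:ℝ) T, ∀ x ∈ Set.Ioo (0:ℝ) 1,
        HasDerivAt (fun y => vx y t) (vxx x t) x)
    (hdt : ∀ t ∈ Set.Ioc (0:ℝ) T, ∀ x ∈ Set.Ioo (0:ℝ) 1,
        HasDerivAt (fun s => v x s) (vt x t) t)
    (hpde : ∀ t ∈ Set.Ioc (0:ℝ) T, ∀ x ∈ Set.Ioo (0:ℝ) 1,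
        vt x t ≤ A * vxx x t - β * v x t + F)
    (hbc0 : (∀ t ∈ Set.Ioc (0:ℝ) T, v 0 t ≤ K) ∨ (∀ t ∈ Set.Ioc (0:ℝ) T, vx 0 t = 0))
    (hbc1 : ∀ t ∈ Set.Ioc (0:ℝ) T, vx 1 t = -l * v 1 t)
    (hic : ∀ x ∈ Set.Icc (0:ℝ) 1, v x 0 ≤ K) :
    ∀ x ∈ Set.Icc (0:ℝ) 1, ∀ t ∈ Set.Icc (0:ℝ) T, v x t ≤ K := by
  intro X hX τ hτ
  set μ : ℝ := Real.sqrt (β / A) with hμdef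
  have hμpos : 0 < μ := Real.sqrt_pos.mpr (div_pos hβ hA)
  have hμ2 : A * (μ * μ) = β := by
    rw [hμdef, Real.mul_self_sqrt (div_pos hβ hA).le]
    field_simp
  have hC : (0:ℝ) < 2 * Real.exp μ := by positivity
  have key : ∀ ε > (0:ℝ), v X τ ≤ K + ε * (2 * Real.exp μ) := by
    intro ε hε
    set g : ℝ → ℝ := fun y => Real.exp (-μ * y + μ) + Real.exp (μ * y + -μ) with hgdef
    set gd : ℝ → ℝ := fun y => -μ * Real.exp (-μ * y + μ) + μ * Real.exp (μ * y + -μ) with hgddef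
    have hgderiv : ∀ y, HasDerivAt g (gd y) y := fun y =>
      (expLin (-μ) μ y).add (expLin μ (-μ) y)
    have hgdderiv : ∀ y, HasDerivAt gd (μ * μ * g y) y := by
      intro y
      have h1 := ((expLin (-μ) μ y).const_mul (-μ)).add ((expLin μ (-μ) y).const_mul μ)
      refine h1.congr_deriv ?_
      simp only [hgdef]
      ring
    have hgpos : ∀ y, 0 < g y := fun y => by positivity
    have hgbound : ∀ y ∈ Set.Icc (0:ℝ) 1, g y ≤ 2 * Real.exp μ := by
      intro y hy
      have e1 : Real.exp (-μ * y + μ) ≤ Real.exp μ :=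
        Real.exp_le_exp.mpr (by nlinarith [hy.1, hμpos])
      have e2 : Real.exp (μ * y + -μ) ≤ Real.exp μ :=
        Real.exp_le_exp.mpr (by nlinarith [hy.2, hμpos])
      simp only [hgdef]
      linarith
    set Z : ℝ → ℝ → ℝ := fun y s => v y s - ε * g y with hZdef
    have hS : IsCompact (Set.Icc (0:ℝ) 1 ×ˢ Set.Icc (0:ℝ) T) := isCompact_Icc.prod isCompact_Icc
    have hSne : (Set.Icc (0:ℝ) 1 ×ˢ Set.Icc (0:ℝ) T).Nonempty :=
      ⟨(0,0), Set.mem_prod.mpr ⟨⟨le_refl 0, zero_le_one⟩, ⟨le_refl 0, hT.le⟩⟩⟩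
    have hZc : ContinuousOn (fun p : ℝ × ℝ => Z p.1 p.2) (Set.Icc 0 1 ×ˢ Set.Icc 0 T) := by
      apply hc.sub
      apply Continuous.continuousOn
      apply Continuous.mul continuous_const
      apply Continuous.add
      · exact Real.continuous_exp.comp ((continuous_const.mul continuous_fst).add continuous_const)
      · exact Real.continuous_exp.comp ((continuous_const.mul continuous_fst).add continuous_const)
    obtain ⟨p0, hp0S, hp0max⟩ := hS.exists_isMaxOn hSne hZc
    obtain ⟨hx0S, ht0S⟩ := Set.mem_prod.mp hp0S
    set x0 := p0.1 with hx0def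
    set t0 := p0.2 with ht0def
    have hmaxpt : ∀ y ∈ Set.Icc (0:ℝ) 1, ∀ s ∈ Set.Icc (0:ℝ) T, Z y s ≤ Z x0 t0 := by
      intro y hy s hs
      have := hp0max (Set.mem_prod.mpr ⟨hy, hs⟩ : ((y,s) : ℝ × ℝ) ∈ Set.Icc (0:ℝ) 1 ×ˢ Set.Icc (0:ℝ) T)
      exact this
    have hZK : Z x0 t0 ≤ K := by
      by_contra hgt
      push_neg at hgt
      rcases eq_or_lt_of_le ht0S.1 with h0 | ht0pos
      · -- t0 = 0
        have h1 : v x0 t0 ≤ K := by rw [← h0]; exact hic x0 hx0S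
        have h2 : 0 < g x0 := hgpos x0
        have : Z x0 t0 ≤ K := by
          simp only [hZdef]
          nlinarith
        linarith
      · have ht0' : t0 ∈ Set.Ioc (0:ℝ) T := ⟨ht0pos, ht0S.2⟩
        set Zx : ℝ → ℝ := fun y => vx y t0 - ε * gd y with hZxdef
        have hZx : ∀ y ∈ Set.Icc (0:ℝ) 1,
            HasDerivWithinAt (fun y' => Z y' t0) (Zx y) (Set.Icc 0 1) y := by
          intro y hy
          exact (hdx t0 ht0' y hy).sub ((hgderiv y).const_mul ε).hasDerivWithinAt
        have hxslice : ∀ y ∈ Set.Icc (0:ℝ) 1, Z y t0 ≤ Z x0 t0 :=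
          fun y hy => hmaxpt y hy t0 ⟨ht0pos.le, ht0S.2⟩
        rcases eq_or_lt_of_le hx0S.1 with hx00 | hx0pos
        · -- x0 = 0
          rcases hbc0 with hD | hN
          · have h1 := hD t0 ht0'
            have h2 : 0 < g x0 := hgpos x0
            have h3 : Z x0 t0 = v 0 t0 - ε * g x0 := by
              simp only [hZdef, ← hx00]
            nlinarith
          · have hmax0 : ∀ y ∈ Set.Icc (0:ℝ) 1, Z y t0 ≤ Z 0 t0 := by
              intro y hy; rw [hx00]; exact hxslice y hy
            have hle : Zx 0 ≤ 0 :=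
              derivLeft zero_lt_one hmax0 (hZx 0 ⟨le_refl 0, zero_le_one⟩)
            have hv0 : vx 0 t0 = 0 := hN t0 ht0'
            have hZx0 : Zx 0 = ε * (μ * Real.exp μ - μ * Real.exp (-μ)) := by
              simp only [hZxdef, hgddef, hv0]
              ring_nf
            have hexp : Real.exp (-μ) < Real.exp μ := Real.exp_lt_exp.mpr (by linarith)
            rw [hZx0] at hle
            have hpos : 0 < ε * (μ * Real.exp μ - μ * Real.exp (-μ)) := by
              apply mul_pos hε
              nlinarith
            linarith
        · rcases eq_or_lt_of_le hx0S.2 with hx01 | hx0lt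
          · -- x0 = 1
            have hmax1 : ∀ y ∈ Set.Icc (0:ℝ) 1, Z y t0 ≤ Z 1 t0 := by
              intro y hy; rw [← hx01]; exact hxslice y hy
            have hge : 0 ≤ Zx 1 :=
              derivRight zero_lt_one hmax1 (hZx 1 ⟨zero_le_one, le_refl 1⟩)
            have hgd1 : gd 1 = 0 := by
              simp only [hgddef]
              norm_num
            have hZx1 : Zx 1 = -l * v 1 t0 := by
              simp only [hZxdef, hgd1, hbc1 t0 ht0']
              ring
            have hg1 : g 1 = 2 := by
              simp only [hgdef]
              norm_num [Real.exp_zero]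
            have hv1 : v 1 t0 = Z 1 t0 + ε * g 1 := by
              simp only [hZdef]; ring
            have hZ1 : K < Z 1 t0 := by rw [← hx01]; exact hgt
            rw [hZx1, hv1, hg1] at hge
            nlinarith
          · -- interior
            have hxI : x0 ∈ Set.Ioo (0:ℝ) 1 := ⟨hx0pos, hx0lt⟩
            have hZxx : HasDerivAt Zx (vxx x0 t0 - ε * (μ * μ * g x0)) x0 :=
              (hdxx t0 ht0' x0 hxI).sub ((hgdderiv x0).const_mul ε)
            have h2 : vxx x0 t0 - ε * (μ * μ * g x0) ≤ 0 := secDeriv hxI hxslice hZx hZxx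
            have hdtz : HasDerivWithinAt (fun s => Z x0 s) (vt x0 t0) (Set.Icc 0 t0) t0 := by
              have := ((hdt t0 ht0' x0 hxI).sub_const (ε * g x0)).hasDerivWithinAt
                (s := Set.Icc 0 t0)
              exact this
            have htmax : ∀ s ∈ Set.Icc (0:ℝ) t0, Z x0 s ≤ Z x0 t0 :=
              fun s hs => hmaxpt x0 hx0S s ⟨hs.1, le_trans hs.2 ht0S.2⟩
            have h3 : 0 ≤ vt x0 t0 := derivRight ht0pos htmax hdtz
            have h4 := hpde t0 ht0' x0 hxI
            have h2' : A * vxx x0 t0 ≤ A * (ε * (μ * μ * g x0)) :=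
              mul_le_mul_of_nonneg_left (by linarith) hA.le
            have heq : A * (ε * (μ * μ * g x0)) = β * (ε * g x0) := by
              rw [← hμ2]; ring
            have hveq : v x0 t0 = Z x0 t0 + ε * g x0 := by
              simp only [hZdef]; ring
            have h5 : β * Z x0 t0 ≤ F := by
              rw [hveq] at h4
              nlinarith
            have h6 : Z x0 t0 ≤ F / β := (le_div_iff₀ hβ).mpr (by linarith [mul_comm β (Z x0 t0)])
            linarith
    have h6 : Z X τ ≤ K := le_trans (hmaxpt X hX τ hτ) hZK
    have h7 : v X τ = Z X τ + ε * g X := by simp only [hZdef]; ring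
    have h8 : ε * g X ≤ ε * (2 * Real.exp μ) :=
      mul_le_mul_of_nonneg_left (hgbound X hX) hε.le
    linarith
  by_contra hcon
  push_neg at hcon
  have hδ : 0 < (v X τ - K) / (2 * (2 * Real.exp μ)) := by
    apply div_pos (by linarith) (by positivity)
  have h1 := key _ hδ
  have h2 : (v X τ - K) / (2 * (2 * Real.exp μ)) * (2 * Real.exp μ) = (v X τ - K) / 2 := by
    field_simp
  rw [h2] at h1
  linarith

private lemma step (A lam σ l T F K : ℝ) (hA : 0 < A) (hl : 0 < l)
    (hσ : 0 < σ) (hσlam : σ < lam) (hT : 0 < T)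
    (hFK : F / (lam - σ) ≤ K) (hK0 : 0 ≤ K)
    (f u ux uxx ut : ℝ → ℝ → ℝ)
    (hcu : ContinuousOn (fun p : ℝ × ℝ => u p.1 p.2) (Set.Icc 0 1 ×ˢ Set.Ici 0))
    (hdx : ∀ t ∈ Set.Ioi (0:ℝ), ∀ x ∈ Set.Icc (0:ℝ) 1,
        HasDerivWithinAt (fun y => u y t) (ux x t) (Set.Icc 0 1) x)
    (hdxx : ∀ t ∈ Set.Ioi (0:ℝ), ∀ x ∈ Set.Ioo (0:ℝ) 1,
        HasDerivWithinAt (fun y => ux y t) (uxx x t) (Set.Ioo 0 1) x)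
    (hdt : ∀ t ∈ Set.Ioi (0:ℝ), ∀ x ∈ Set.Ioo (0:ℝ) 1,
        HasDerivWithinAt (fun s => u x s) (ut x t) (Set.Ioi 0) t)
    (hpde : ∀ t ∈ Set.Ioi (0:ℝ), ∀ x ∈ Set.Ioo (0:ℝ) 1,
        ut x t = A * uxx x t - lam * u x t + f x t)
    (hfF : ∀ x ∈ Set.Icc (0:ℝ) 1, ∀ t ∈ Set.Ioc (0:ℝ) T, Real.exp (σ * t) * f x t ≤ F)
    (hbc0 : (∀ t ∈ Set.Ioc (0:ℝ) T, Real.exp (σ * t) * u 0 t ≤ K) ∨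
            (∀ t ∈ Set.Ioc (0:ℝ) T, ux 0 t = 0))
    (hbc1 : ∀ t ∈ Set.Ioc (0:ℝ) T, ux 1 t = -l * u 1 t)
    (hic : ∀ x ∈ Set.Icc (0:ℝ) 1, u x 0 ≤ K) :
    ∀ x ∈ Set.Icc (0:ℝ) 1, Real.exp (σ * T) * u x T ≤ K := by
  have hβ : 0 < lam - σ := sub_pos.mpr hσlam
  have hE : ∀ s : ℝ, HasDerivAt (fun r : ℝ => Real.exp (σ * r)) (σ * Real.exp (σ * s)) s := by
    intro s
    simpa using expLin σ 0 s
  have main := maxprin A (lam - σ) l F T K hA hβ hl hT hFK hK0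
    (fun x t => Real.exp (σ * t) * u x t)
    (fun x t => Real.exp (σ * t) * ux x t)
    (fun x t => Real.exp (σ * t) * uxx x t)
    (fun x t => σ * Real.exp (σ * t) * u x t + Real.exp (σ * t) * ut x t)
    (by
      exact ((Real.continuous_exp.comp (continuous_const.mul continuous_snd)).continuousOn).mul
        (hcu.mono (Set.prod_mono Set.Subset.rfl Set.Icc_subset_Ici_self)))
    (by
      intro t ht x hx
      exact (hdx t ht.1 x hx).const_mul _)
    (by
      intro t ht x hx
      exact ((hdxx t ht.1 x hx).hasDerivAt (isOpen_Ioo.mem_nhds hx)).const_mul _)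
    (by
      intro t ht x hx
      have h1 := (hdt t ht.1 x hx).hasDerivAt (Ioi_mem_nhds ht.1)
      exact (hE t).mul h1)
    (by
      intro t ht x hx
      have h1 := hpde t ht.1 x hx
      have h2 := hfF x (Set.Ioo_subset_Icc_self hx) t ht
      have h3 : σ * Real.exp (σ * t) * u x t + Real.exp (σ * t) * ut x t
          = A * (Real.exp (σ * t) * uxx x t) - (lam - σ) * (Real.exp (σ * t) * u x t)
            + Real.exp (σ * t) * f x t := by
        rw [h1]; ring
      rw [h3]
      linarith)
    (by
      rcases hbc0 with hD | hN
      · exact Or.inl hD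
      · refine Or.inr (fun t ht => ?_)
        rw [hN t ht, mul_zero])
    (by
      intro t ht
      rw [hbc1 t ht]
      ring)
    (by
      intro x hx
      simpa [Real.exp_zero] using hic x hx)
  exact fun x hx => main x hx T ⟨hT.le, le_refl T⟩



/-- Step 1 of the proof of Theorem 4: the weighted max-norm estimate for the
disturbance-observer state `q̂ = w − q̃`. -/
theorem stmt17
    (a lam l σ : ℝ) (ha : 0 < a) (hlam : 0 < lam) (hl : 0 < l)
    (hσ : σ ∈ Set.Ioo 0 lam)
    (f : ℝ → ℝ → ℝ) (qb : ℝ → ℝ)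
    (hf : ContinuousOn (fun p : ℝ × ℝ => f p.1 p.2) (Set.Icc 0 1 ×ˢ Set.Ici 0))
    (hqb : ContinuousOn qb (Set.Ici 0))
    (w wx wxx wt : ℝ → ℝ → ℝ) (w0 : ℝ → ℝ)
    (hw0 : ContinuousOn w0 (Set.Icc 0 1))
    (hw_sol : IsParabolicSol a lam f w wx wxx wt)
    (hw_bc0 : ∀ t > (0:ℝ), w 0 t = qb t)
    (hw_bc1 : ∀ t > (0:ℝ), wx 1 t = -l * w 1 t)
    (hw_ic : ∀ x ∈ Set.Icc (0:ℝ) 1, w x 0 = w0 x)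
    (qt qtx qtxx qtt : ℝ → ℝ → ℝ) (qt0 : ℝ → ℝ)
    (hqt0 : ContinuousOn qt0 (Set.Icc 0 1))
    (hqt_sol : IsParabolicSol a lam f qt qtx qtxx qtt)
    (hqt_bc0 : ∀ t > (0:ℝ), qtx 0 t = 0)
    (hqt_bc1 : ∀ t > (0:ℝ), qtx 1 t = -l * qt 1 t)
    (hqt_ic : ∀ x ∈ Set.Icc (0:ℝ) 1, qt x 0 = qt0 x) :
    ∀ t > (0:ℝ),
      supIcc01 (fun x => Real.exp (σ * t) * (w x t - qt x t)) ≤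
        supIcc01 w0 + supIcc01 qt0 +
        (2 / (lam - σ)) *
          sSup ((fun p : ℝ × ℝ => |Real.exp (σ * p.2) * f p.1 p.2|) ''
            (Set.Icc 0 1 ×ˢ Set.Icc 0 t)) +
        sSup ((fun s => |Real.exp (σ * s) * qb s|) '' Set.Icc 0 t) := by
  intro t ht
  obtain ⟨hσpos, hσlam⟩ := hσ
  have hβ : 0 < lam - σ := sub_pos.mpr hσlam
  set F := sSup ((fun p : ℝ × ℝ => |Real.exp (σ * p.2) * f p.1 p.2|) ''
      (Set.Icc 0 1 ×ˢ Set.Icc 0 t)) with hFdef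
  set Q := sSup ((fun s => |Real.exp (σ * s) * qb s|) '' Set.Icc 0 t) with hQdef
  set Mw := supIcc01 w0 with hMwdef
  set Mq := supIcc01 qt0 with hMqdef
  -- basic facts about the suprema
  have hmem00 : ((0:ℝ), (0:ℝ)) ∈ Set.Icc (0:ℝ) 1 ×ˢ Set.Icc (0:ℝ) t :=
    Set.mem_prod.mpr ⟨⟨le_refl 0, zero_le_one⟩, ⟨le_refl 0, ht.le⟩⟩
  have hFc : ContinuousOn (fun p : ℝ × ℝ => |Real.exp (σ * p.2) * f p.1 p.2|)
      (Set.Icc 0 1 ×ˢ Set.Icc 0 t) := by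
    apply ContinuousOn.abs
    exact ((Real.continuous_exp.comp (continuous_const.mul continuous_snd)).continuousOn).mul
      (hf.mono (Set.prod_mono Set.Subset.rfl Set.Icc_subset_Ici_self))
  have hFbdd : BddAbove ((fun p : ℝ × ℝ => |Real.exp (σ * p.2) * f p.1 p.2|) ''
      (Set.Icc 0 1 ×ˢ Set.Icc 0 t)) :=
    (isCompact_Icc.prod isCompact_Icc).bddAbove_image hFc
  have hFmem : ∀ x ∈ Set.Icc (0:ℝ) 1, ∀ s ∈ Set.Icc (0:ℝ) t,
      |Real.exp (σ * s) * f x s| ≤ F := by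
    intro x hx s hs
    exact le_csSup hFbdd ⟨(x, s), Set.mem_prod.mpr ⟨hx, hs⟩, rfl⟩
  have hF0 : 0 ≤ F :=
    le_trans (abs_nonneg _) (hFmem 0 ⟨le_refl 0, zero_le_one⟩ 0 ⟨le_refl 0, ht.le⟩)
  have hQc : ContinuousOn (fun s => |Real.exp (σ * s) * qb s|) (Set.Icc 0 t) := by
    apply ContinuousOn.abs
    exact ((Real.continuous_exp.comp (continuous_const.mul continuous_id)).continuousOn).mul
      (hqb.mono Set.Icc_subset_Ici_self)
  have hQbdd : BddAbove ((fun s => |Real.exp (σ * s) * qb s|) '' Set.Icc 0 t) :=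
    isCompact_Icc.bddAbove_image hQc
  have hQmem : ∀ s ∈ Set.Icc (0:ℝ) t, |Real.exp (σ * s) * qb s| ≤ Q :=
    fun s hs => le_csSup hQbdd ⟨s, hs, rfl⟩
  have hQ0 : 0 ≤ Q := le_trans (abs_nonneg _) (hQmem 0 ⟨le_refl 0, ht.le⟩)
  have hMwbdd : BddAbove ((fun x => |w0 x|) '' Set.Icc 0 1) :=
    isCompact_Icc.bddAbove_image hw0.abs
  have hMwmem : ∀ x ∈ Set.Icc (0:ℝ) 1, |w0 x| ≤ Mw := by
    intro x hx
    rw [hMwdef]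
    unfold supIcc01
    exact le_csSup hMwbdd ⟨x, hx, rfl⟩
  have hMw0 : 0 ≤ Mw := le_trans (abs_nonneg _) (hMwmem 0 ⟨le_refl 0, zero_le_one⟩)
  have hMqbdd : BddAbove ((fun x => |qt0 x|) '' Set.Icc 0 1) :=
    isCompact_Icc.bddAbove_image hqt0.abs
  have hMqmem : ∀ x ∈ Set.Icc (0:ℝ) 1, |qt0 x| ≤ Mq := by
    intro x hx
    rw [hMqdef]
    unfold supIcc01
    exact le_csSup hMqbdd ⟨x, hx, rfl⟩
  have hMq0 : 0 ≤ Mq := le_trans (abs_nonneg _) (hMqmem 0 ⟨le_refl 0, zero_le_one⟩)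
  set Kw := Mw + F / (lam - σ) + Q with hKwdef
  set Kq := Mq + F / (lam - σ) with hKqdef
  have hFβ : 0 ≤ F / (lam - σ) := div_nonneg hF0 hβ.le
  have hKw0 : 0 ≤ Kw := by positivity
  have hKq0 : 0 ≤ Kq := by positivity
  -- the four applications of the weighted maximum principle
  have h1 : ∀ x ∈ Set.Icc (0:ℝ) 1, Real.exp (σ * t) * w x t ≤ Kw := by
    apply step a lam σ l t F Kw ha hl hσpos hσlam ht (by rw [hKwdef]; linarith) hKw0 f w wx wxx wt
      hw_sol.cont_u hw_sol.deriv_x hw_sol.deriv_xx hw_sol.deriv_t hw_sol.pde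
    · intro x hx s hs
      exact le_trans (le_abs_self _) (hFmem x hx s ⟨hs.1.le, hs.2⟩)
    · left
      intro s hs
      rw [hw_bc0 s hs.1]
      exact le_trans (le_abs_self _) (le_trans (hQmem s ⟨hs.1.le, hs.2⟩) (by rw [hKwdef]; linarith))
    · intro s hs
      exact hw_bc1 s hs.1
    · intro x hx
      rw [hw_ic x hx]
      exact le_trans (le_abs_self _) (le_trans (hMwmem x hx) (by rw [hKwdef]; linarith))
  have h2 : ∀ x ∈ Set.Icc (0:ℝ) 1, Real.exp (σ * t) * (-(w x t)) ≤ Kw := by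
    apply step a lam σ l t F Kw ha hl hσpos hσlam ht (by rw [hKwdef]; linarith) hKw0
      (fun x s => -(f x s)) (fun x s => -(w x s)) (fun x s => -(wx x s))
      (fun x s => -(wxx x s)) (fun x s => -(wt x s))
      hw_sol.cont_u.neg
      (fun s hs x hx => (hw_sol.deriv_x s hs x hx).neg)
      (fun s hs x hx => (hw_sol.deriv_xx s hs x hx).neg)
      (fun s hs x hx => (hw_sol.deriv_t s hs x hx).neg)
      (by
        intro s hs x hx
        rw [hw_sol.pde s hs x hx]
        ring)
    · intro x hx s hs
      have := hFmem x hx s ⟨hs.1.le, hs.2⟩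
      have habs : Real.exp (σ * s) * -(f x s) = -(Real.exp (σ * s) * f x s) := by ring
      rw [habs]
      exact le_trans (neg_le_abs _) this
    · left
      intro s hs
      have habs : Real.exp (σ * s) * -(w 0 s) = -(Real.exp (σ * s) * w 0 s) := by ring
      rw [habs, hw_bc0 s hs.1]
      exact le_trans (neg_le_abs _) (le_trans (hQmem s ⟨hs.1.le, hs.2⟩) (by rw [hKwdef]; linarith))
    · intro s hs
      rw [hw_bc1 s hs.1]
      ring
    · intro x hx
      rw [hw_ic x hx]
      exact le_trans (neg_le_abs _) (le_trans (hMwmem x hx) (by rw [hKwdef]; linarith))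
  have h3 : ∀ x ∈ Set.Icc (0:ℝ) 1, Real.exp (σ * t) * qt x t ≤ Kq := by
    apply step a lam σ l t F Kq ha hl hσpos hσlam ht (by rw [hKqdef]; linarith) hKq0 f qt qtx qtxx qtt
      hqt_sol.cont_u hqt_sol.deriv_x hqt_sol.deriv_xx hqt_sol.deriv_t hqt_sol.pde
    · intro x hx s hs
      exact le_trans (le_abs_self _) (hFmem x hx s ⟨hs.1.le, hs.2⟩)
    · right
      intro s hs
      exact hqt_bc0 s hs.1
    · intro s hs
      exact hqt_bc1 s hs.1
    · intro x hx
      rw [hqt_ic x hx]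
      exact le_trans (le_abs_self _) (le_trans (hMqmem x hx) (by rw [hKqdef]; linarith))
  have h4 : ∀ x ∈ Set.Icc (0:ℝ) 1, Real.exp (σ * t) * (-(qt x t)) ≤ Kq := by
    apply step a lam σ l t F Kq ha hl hσpos hσlam ht (by rw [hKqdef]; linarith) hKq0
      (fun x s => -(f x s)) (fun x s => -(qt x s)) (fun x s => -(qtx x s))
      (fun x s => -(qtxx x s)) (fun x s => -(qtt x s))
      hqt_sol.cont_u.neg
      (fun s hs x hx => (hqt_sol.deriv_x s hs x hx).neg)
      (fun s hs x hx => (hqt_sol.deriv_xx s hs x hx).neg)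
      (fun s hs x hx => (hqt_sol.deriv_t s hs x hx).neg)
      (by
        intro s hs x hx
        rw [hqt_sol.pde s hs x hx]
        ring)
    · intro x hx s hs
      have := hFmem x hx s ⟨hs.1.le, hs.2⟩
      have habs : Real.exp (σ * s) * -(f x s) = -(Real.exp (σ * s) * f x s) := by ring
      rw [habs]
      exact le_trans (neg_le_abs _) this
    · right
      intro s hs
      rw [hqt_bc0 s hs.1]
      ring
    · intro s hs
      rw [hqt_bc1 s hs.1]
      ring
    · intro x hx
      rw [hqt_ic x hx]
      exact le_trans (neg_le_abs _) (le_trans (hMqmem x hx) (by rw [hKqdef]; linarith))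
  -- combine
  unfold supIcc01
  apply csSup_le ((Set.nonempty_Icc.mpr zero_le_one).image _)
  rintro b ⟨x, hx, rfl⟩
  have hw_abs : |Real.exp (σ * t) * w x t| ≤ Kw := by
    rw [abs_le]
    constructor
    · have := h2 x hx
      nlinarith
    · exact h1 x hx
  have hqt_abs : |Real.exp (σ * t) * qt x t| ≤ Kq := by
    rw [abs_le]
    constructor
    · have := h4 x hx
      nlinarith
    · exact h3 x hx
  have hsplit : |Real.exp (σ * t) * (w x t - qt x t)|
      ≤ |Real.exp (σ * t) * w x t| + |Real.exp (σ * t) * qt x t| := by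
    have : Real.exp (σ * t) * (w x t - qt x t)
        = Real.exp (σ * t) * w x t - Real.exp (σ * t) * qt x t := by ring
    rw [this]
    exact abs_sub _ _
  have h2F : 2 / (lam - σ) * F = F / (lam - σ) + F / (lam - σ) := by
    ring
  calc |Real.exp (σ * t) * (w x t - qt x t)|
      ≤ Kw + Kq := le_trans hsplit (by linarith)
    _ = Mw + Mq + 2 / (lam - σ) * F + Q := by rw [hKwdef, hKqdef, h2F]; ring
end

section
/- Let α>0, λ>0, l>0, σ ∈ (0,λ), T>0, and let r be continuous on [0,T]. Let u^{ref} be a classical solution on [0,1]×[0,T] of u^{ref}_t = α u^{ref}_xx − λ u^{ref} on (0,1)×(0,T), with u^{ref}(0,t) = r(t) and u^{ref}_x(1,t) = −l u^{ref}(1,t) for all t ∈ (0,T), and initial datum u₀^{ref} ∈ C([0,1]). Then for every t ∈ (0,T), ‖e^{σt} u^{ref}(·,t)‖_{C([0,1])} ≤ ‖u₀^{ref}‖_{C([0,1])} + max_{s∈[0,T]} |e^{σs} r(s)|. In particular, the reference system is input-to-state stable in the max-norm with respect to the boundary input r. -/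
open Set Filter Topology

/-- If the derivative of `f` within `s` at `x` exists, and all points of `s` other than `x`
lie to the left of `x` with values at most `f x`, then the derivative is nonnegative. -/
lemma deriv_nonneg_of_left_max {f : ℝ → ℝ} {d x : ℝ} {s : Set ℝ}
    (hd : HasDerivWithinAt f d s x)
    (hlt : ∀ y ∈ s \ {x}, y < x) (hle : ∀ y ∈ s \ {x}, f y ≤ f x)
    (hx : x ∈ closure (s \ {x})) : 0 ≤ d := by
  rw [hasDerivWithinAt_iff_tendsto_slope] at hd
  have hne : (𝓝[s \ {x}] x).NeBot := mem_closure_iff_nhdsWithin_neBot.mp hx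
  refine ge_of_tendsto hd ?_
  filter_upwards [self_mem_nhdsWithin] with y hy
  rw [slope_def_field]
  exact div_nonneg_iff.mpr (Or.inr ⟨sub_nonpos.mpr (hle y hy), sub_nonpos.mpr (hlt y hy).le⟩)

/-- Second-derivative test (one direction): at an interior maximum over `[0,1]`,
the second derivative is nonpositive. -/
lemma second_deriv_nonpos_at_interior_max {f g : ℝ → ℝ} {c x₀ : ℝ}
    (hf : ∀ x ∈ Set.Icc (0:ℝ) 1, HasDerivWithinAt f (g x) (Set.Icc 0 1) x)
    (hg : HasDerivAt g c x₀)
    (hx₀ : x₀ ∈ Set.Ioo (0:ℝ) 1)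
    (hmax : ∀ x ∈ Set.Icc (0:ℝ) 1, f x ≤ f x₀) : c ≤ 0 := by
  by_contra hc
  push_neg at hc
  have hmem : Set.Icc (0:ℝ) 1 ∈ 𝓝 x₀ := Icc_mem_nhds hx₀.1 hx₀.2
  have hx₀1 : x₀ ∈ Set.Icc (0:ℝ) 1 := Set.Ioo_subset_Icc_self hx₀
  have hfd : HasDerivAt f (g x₀) x₀ := (hf x₀ hx₀1).hasDerivAt hmem
  have hloc : IsLocalMax f x₀ := by
    filter_upwards [hmem] with y hy using hmax y hy
  have hg0 : g x₀ = 0 := hloc.hasDerivAt_eq_zero hfd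
  rw [hasDerivAt_iff_tendsto_slope] at hg
  have hev : ∀ᶠ y in 𝓝[≠] x₀, 0 < slope g x₀ y := hg.eventually (eventually_gt_nhds hc)
  rw [eventually_nhdsWithin_iff] at hev
  obtain ⟨ε, hε, hball⟩ := Metric.eventually_nhds_iff.mp hev
  set δ := min (ε / 2) ((1 - x₀) / 2) with hδdef
  have hδ : 0 < δ := lt_min (by linarith) (by linarith [hx₀.2])
  have hδε : δ ≤ ε / 2 := min_le_left _ _
  have hδ1 : x₀ + δ < 1 := by
    have := min_le_right (ε / 2) ((1 - x₀) / 2); simp only [← hδdef] at this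
    linarith [hx₀.2]
  have hsub : Set.Icc x₀ (x₀ + δ) ⊆ Set.Icc (0:ℝ) 1 := by
    intro y hy
    exact ⟨le_trans hx₀.1.le hy.1, le_trans hy.2 (by linarith)⟩
  have hcont : ContinuousOn f (Set.Icc x₀ (x₀ + δ)) :=
    fun y hy => ((hf y (hsub hy)).continuousWithinAt).mono hsub
  have hmono : StrictMonoOn f (Set.Icc x₀ (x₀ + δ)) := by
    refine strictMonoOn_of_deriv_pos (convex_Icc _ _) hcont ?_
    intro y hy
    rw [interior_Icc] at hy
    have hy01 : y ∈ Set.Ioo (0:ℝ) 1 := ⟨lt_trans hx₀.1 hy.1, lt_trans hy.2 hδ1⟩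
    have hyd : HasDerivAt f (g y) y :=
      (hf y (Set.Ioo_subset_Icc_self hy01)).hasDerivAt (Icc_mem_nhds hy01.1 hy01.2)
    rw [hyd.deriv]
    have hne : y ≠ x₀ := ne_of_gt hy.1
    have hdist : dist y x₀ < ε := by
      rw [Real.dist_eq, abs_of_pos (by linarith [hy.1])]
      linarith [hy.2]
    have hs := hball hdist hne
    rw [slope_def_field, hg0, sub_zero] at hs
    have hyx : 0 < y - x₀ := by linarith [hy.1]
    have : 0 < g y / (y - x₀) * (y - x₀) := mul_pos hs hyx
    rwa [div_mul_cancel₀ _ (ne_of_gt hyx)] at this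
  have hlt : f x₀ < f (x₀ + δ) :=
    hmono (Set.left_mem_Icc.mpr (by linarith)) (Set.right_mem_Icc.mpr (by linarith)) (by linarith)
  exact absurd (hmax _ (hsub (Set.right_mem_Icc.mpr (by linarith)))) (not_le.mpr hlt)

/-- Core maximum principle: a solution of `u_t = a u_xx - lam u` with `lam > 0`,
Robin condition at `x = 1`, and data bounded above by `M ≥ 0` stays below `M`. -/
lemma core_max_principle (T a lam l : ℝ) (ha : 0 < a) (hlam : 0 < lam) (hl : 0 < l)
    (u ux uxx ut : ℝ → ℝ → ℝ)
    (hsol : IsParabolicSolOn T a lam (fun _ _ => 0) u ux uxx ut)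
    (hbc1 : ∀ t ∈ Set.Ioo (0:ℝ) T, ux 1 t = -l * u 1 t)
    (M : ℝ) (hM0 : 0 ≤ M)
    (h0 : ∀ x ∈ Set.Icc (0:ℝ) 1, u x 0 ≤ M)
    (hb : ∀ t ∈ Set.Ioo (0:ℝ) T, u 0 t ≤ M) :
    ∀ t ∈ Set.Ioo (0:ℝ) T, ∀ x ∈ Set.Icc (0:ℝ) 1, u x t ≤ M := by
  intro tb htb xb hxb
  set K : Set (ℝ × ℝ) := Set.Icc 0 1 ×ˢ Set.Icc 0 tb with hK
  have hKcomp : IsCompact K := isCompact_Icc.prod isCompact_Icc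
  have hKsub : K ⊆ Set.Icc 0 1 ×ˢ Set.Icc 0 T :=
    Set.prod_mono_right (Set.Icc_subset_Icc_right htb.2.le)
  have hKne : K.Nonempty := ⟨(0, 0), ⟨⟨le_refl _, zero_le_one⟩, ⟨le_refl _, htb.1.le⟩⟩⟩
  obtain ⟨⟨x₀, t₀⟩, hpK, hmax⟩ := hKcomp.exists_isMaxOn hKne (hsol.cont_u.mono hKsub)
  have hxt : (xb, tb) ∈ K := ⟨hxb, ⟨htb.1.le, le_refl _⟩⟩
  have hle : u xb tb ≤ u x₀ t₀ := hmax hxt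
  by_contra hcon
  push_neg at hcon
  have hMlt : M < u x₀ t₀ := lt_of_lt_of_le hcon hle
  have hx₀ : x₀ ∈ Set.Icc (0:ℝ) 1 := hpK.1
  have ht₀ : t₀ ∈ Set.Icc (0:ℝ) tb := hpK.2
  have hupos : 0 < u x₀ t₀ := lt_of_le_of_lt hM0 hMlt
  have ht₀0 : 0 < t₀ := by
    rcases eq_or_lt_of_le ht₀.1 with h | h
    · exfalso; have := h0 x₀ hx₀; rw [← h] at hMlt; linarith
    · exact h
  have ht₀T : t₀ ∈ Set.Ioo (0:ℝ) T := ⟨ht₀0, lt_of_le_of_lt ht₀.2 htb.2⟩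
  have hx₀0 : 0 < x₀ := by
    rcases eq_or_lt_of_le hx₀.1 with h | h
    · exfalso; have := hb t₀ ht₀T; rw [← h] at hMlt; linarith
    · exact h
  have hmaxx : ∀ y ∈ Set.Icc (0:ℝ) 1, u y t₀ ≤ u x₀ t₀ := fun y hy => hmax (Set.mk_mem_prod hy ht₀)
  rcases eq_or_lt_of_le hx₀.2 with hx1 | hx1
  · -- x₀ = 1 : Robin boundary gives a contradiction
    have hd : HasDerivWithinAt (fun y => u y t₀) (ux 1 t₀) (Set.Icc 0 1) 1 :=
      hsol.deriv_x t₀ ht₀T 1 (Set.right_mem_Icc.mpr zero_le_one)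
    have hd0 : 0 ≤ ux 1 t₀ := by
      refine deriv_nonneg_of_left_max hd ?_ ?_ ?_
      · rintro y ⟨hy, hy1⟩
        exact lt_of_le_of_ne hy.2 (by simpa using hy1)
      · rintro y ⟨hy, _⟩
        have := hmaxx y hy; rw [← hx1]; exact this
      · have heq : Set.Icc (0:ℝ) 1 \ {1} = Set.Ico (0:ℝ) 1 := by
          ext z; simp [Set.mem_Icc, Set.mem_Ico, and_assoc, lt_iff_le_and_ne]
        rw [heq, closure_Ico (by norm_num : (0:ℝ) ≠ 1)]
        exact ⟨zero_le_one, le_refl _⟩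
    have hbcv := hbc1 t₀ ht₀T
    have hu1 : 0 < u 1 t₀ := by rw [← hx1]; exact hupos
    rw [hbcv] at hd0
    nlinarith
  · -- x₀ interior
    have hx₀I : x₀ ∈ Set.Ioo (0:ℝ) 1 := ⟨hx₀0, hx1⟩
    have hgd : HasDerivAt (fun y => ux y t₀) (uxx x₀ t₀) x₀ :=
      (hsol.deriv_xx t₀ ht₀T x₀ hx₀I).hasDerivAt (Ioo_mem_nhds hx₀I.1 hx₀I.2)
    have hxx : uxx x₀ t₀ ≤ 0 :=
      second_deriv_nonpos_at_interior_max (fun x hx => hsol.deriv_x t₀ ht₀T x hx) hgd hx₀I hmaxx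
    have hdt : HasDerivWithinAt (fun s => u x₀ s) (ut x₀ t₀) (Set.Ioo 0 t₀) t₀ :=
      (hsol.deriv_t t₀ ht₀T x₀ hx₀I).mono (Set.Ioo_subset_Ioo_right ht₀T.2.le)
    have hut : 0 ≤ ut x₀ t₀ := by
      refine deriv_nonneg_of_left_max hdt ?_ ?_ ?_
      · rintro y ⟨hy, _⟩; exact hy.2
      · rintro y ⟨hy, _⟩
        exact hmax (⟨hx₀, ⟨hy.1.le, le_trans hy.2.le ht₀.2⟩⟩ : (x₀, y) ∈ K)
      · have heq : Set.Ioo (0:ℝ) t₀ \ {t₀} = Set.Ioo (0:ℝ) t₀ := by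
          apply Set.diff_singleton_eq_self; simp
        rw [heq, closure_Ioo (ne_of_lt ht₀0)]
        exact ⟨ht₀0.le, le_refl _⟩
    have hpde := hsol.pde t₀ ht₀T x₀ hx₀I
    simp only [add_zero] at hpde
    nlinarith [mul_pos hlam hupos, mul_nonneg ha.le (neg_nonneg.mpr hxx)]

/-- Scaling a solution by `c e^{σ t}` gives a solution with decay rate `lam - σ`. -/
lemma scaled_sol (T a lam σ c : ℝ) (u ux uxx ut : ℝ → ℝ → ℝ)
    (hsol : IsParabolicSolOn T a lam (fun _ _ => 0) u ux uxx ut) :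
    IsParabolicSolOn T a (lam - σ) (fun _ _ => 0)
      (fun x t => c * Real.exp (σ * t) * u x t)
      (fun x t => c * Real.exp (σ * t) * ux x t)
      (fun x t => c * Real.exp (σ * t) * uxx x t)
      (fun x t => c * Real.exp (σ * t) * (σ * u x t + ut x t)) where
  cont_u :=
    ((by fun_prop : Continuous fun p : ℝ × ℝ => c * Real.exp (σ * p.2)).continuousOn).mul
      hsol.cont_u
  cont_ux :=
    ((by fun_prop : Continuous fun p : ℝ × ℝ => c * Real.exp (σ * p.2)).continuousOn).mul
      hsol.cont_ux
  cont_uxx :=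
    ((by fun_prop : Continuous fun p : ℝ × ℝ => c * Real.exp (σ * p.2)).continuousOn).mul
      hsol.cont_uxx
  cont_ut := by
    refine ((by fun_prop : Continuous fun p : ℝ × ℝ => c * Real.exp (σ * p.2)).continuousOn).mul
      ((continuousOn_const.mul (hsol.cont_u.mono ?_)).add hsol.cont_ut)
    exact Set.prod_mono Set.Ioo_subset_Icc_self Set.Ioo_subset_Icc_self
  deriv_x := fun t ht x hx => (hsol.deriv_x t ht x hx).const_mul (c * Real.exp (σ * t))
  deriv_xx := fun t ht x hx => (hsol.deriv_xx t ht x hx).const_mul (c * Real.exp (σ * t))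
  deriv_t := by
    intro t ht x hx
    have h2 : HasDerivAt (fun s : ℝ => σ * s) σ t := by
      simpa using (hasDerivAt_id t).const_mul σ
    have h1 : HasDerivAt (fun s : ℝ => c * Real.exp (σ * s)) (c * (Real.exp (σ * t) * σ)) t :=
      (((Real.hasDerivAt_exp (σ * t)).comp t h2)).const_mul c
    have h3 := h1.hasDerivWithinAt.mul (hsol.deriv_t t ht x hx)
    have heq : c * Real.exp (σ * t) * (σ * u x t + ut x t)
        = c * (Real.exp (σ * t) * σ) * u x t + c * Real.exp (σ * t) * ut x t := by ring
    rw [heq]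
    exact h3
  pde := by
    intro t ht x hx
    have hp := hsol.pde t ht x hx
    simp only [add_zero] at hp
    simp only [hp]
    ring

/-- ISS of the reference system with respect to the boundary input `r`, in the
weighted max-norm. -/
theorem stmt19
    (a lam l σ T : ℝ) (ha : 0 < a) (hlam : 0 < lam) (hl : 0 < l)
    (hσ : σ ∈ Set.Ioo 0 lam) (hT : 0 < T)
    (r : ℝ → ℝ) (hr : ContinuousOn r (Set.Icc 0 T))
    (uref urefx urefxx ureft : ℝ → ℝ → ℝ) (uref0 : ℝ → ℝ)
    (huref0 : ContinuousOn uref0 (Set.Icc 0 1))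
    (hsol : IsParabolicSolOn T a lam (fun _ _ => 0) uref urefx urefxx ureft)
    (hbc0 : ∀ t ∈ Set.Ioo (0:ℝ) T, uref 0 t = r t)
    (hbc1 : ∀ t ∈ Set.Ioo (0:ℝ) T, urefx 1 t = -l * uref 1 t)
    (hic : ∀ x ∈ Set.Icc (0:ℝ) 1, uref x 0 = uref0 x) :
    ∀ t ∈ Set.Ioo (0:ℝ) T,
      supIcc01 (fun x => Real.exp (σ * t) * uref x t) ≤
        supIcc01 uref0 + sSup ((fun s => |Real.exp (σ * s) * r s|) '' Set.Icc 0 T) := by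
  obtain ⟨hσ0, hσlam⟩ := hσ
  have hbddR : BddAbove ((fun s => |Real.exp (σ * s) * r s|) '' Set.Icc 0 T) :=
    isCompact_Icc.bddAbove_image
      (((Real.continuous_exp.comp (continuous_const.mul continuous_id)).continuousOn.mul hr).abs)
  have hbddN : BddAbove ((fun x => |uref0 x|) '' Set.Icc 0 1) :=
    isCompact_Icc.bddAbove_image huref0.abs
  set R := sSup ((fun s => |Real.exp (σ * s) * r s|) '' Set.Icc 0 T) with hRdef
  set N := supIcc01 uref0 with hNdef
  have hRle : ∀ s ∈ Set.Icc (0:ℝ) T, |Real.exp (σ * s) * r s| ≤ R :=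
    fun s hs => le_csSup hbddR (Set.mem_image_of_mem _ hs)
  have hNle : ∀ x ∈ Set.Icc (0:ℝ) 1, |uref0 x| ≤ N := by
    intro x hx
    rw [hNdef, supIcc01]
    exact le_csSup hbddN (Set.mem_image_of_mem _ hx)
  have hR0 : 0 ≤ R := le_trans (abs_nonneg _) (hRle 0 ⟨le_refl _, hT.le⟩)
  have hN0 : 0 ≤ N := le_trans (abs_nonneg _) (hNle 0 ⟨le_refl _, zero_le_one⟩)
  have hM0 : 0 ≤ N + R := add_nonneg hN0 hR0
  have key : ∀ c : ℝ, |c| = 1 → ∀ t ∈ Set.Ioo (0:ℝ) T, ∀ x ∈ Set.Icc (0:ℝ) 1,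
      c * Real.exp (σ * t) * uref x t ≤ N + R := by
    intro c hc
    refine core_max_principle T a (lam - σ) l ha (by linarith) hl _ _ _ _
      (scaled_sol T a lam σ c uref urefx urefxx ureft hsol) ?_ (N + R) hM0 ?_ ?_
    · intro s hs
      rw [hbc1 s hs]; ring
    · intro y hy
      have he : Real.exp (σ * 0) = 1 := by rw [mul_zero, Real.exp_zero]
      rw [he, mul_one, hic y hy]
      calc c * uref0 y ≤ |c * uref0 y| := le_abs_self _
        _ = |uref0 y| := by rw [abs_mul, hc, one_mul]
        _ ≤ N := hNle y hy
        _ ≤ N + R := by linarith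
    · intro s hs
      rw [hbc0 s hs]
      calc c * Real.exp (σ * s) * r s ≤ |c * Real.exp (σ * s) * r s| := le_abs_self _
        _ = |Real.exp (σ * s) * r s| := by rw [mul_assoc, abs_mul, hc, one_mul]
        _ ≤ R := hRle s ⟨hs.1.le, hs.2.le⟩
        _ ≤ N + R := by linarith
  intro t ht
  rw [supIcc01]
  refine Real.sSup_le ?_ hM0
  rintro y ⟨x, hx, rfl⟩
  have h1 := key 1 abs_one t ht x hx
  have h2 := key (-1) (by simp) t ht x hx
  rw [one_mul] at h1
  rw [neg_one_mul, neg_mul] at h2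
  exact abs_le.mpr ⟨by linarith, h1⟩
end
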